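/- arXiv:1308.0632 — 13 statements merged into one kernel-verified Lean document; each statement's English description precedes it below -/
import Mathlib

section
/- Let P = [Q_1 | ⋯ | Q_s] be an r × sn parent matrix for (S, D). Let T' be a t × n matrix over F such that the vertically stacked matrix (Q_1; ⋯ ; Q_s; T') has trivial kernel, and let T' be partitioned into matrices G'_1, …, G'_s (so that stacking G'_1, …, G'_s vertically recovers T'). If H_1, …, H_s are matrices over F with n columns such that ker H_i equals the kernel of the stacked matrix (G'_i; Q_i) for every i, then H_1, …, H_s form a lossless linear compression of S. -/
open Matrix

/-- A source with deviation symmetry: `S ⊆ (F^n)^s` is closed under uniform shifts. -/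
def DevSym {F : Type*} [Field F] {s n : ℕ} (S : Set (Fin s → Fin n → F)) : Prop :=
  ∀ x ∈ S, ∀ v : Fin n → F, (fun i => x i + v) ∈ S

/-- `D` is a representative set of `S`: `D ⊆ S` and every `σ ∈ S` is uniquely
`σ = (d_1 + v, …, d_s + v)` with `(d_1,…,d_s) ∈ D`, `v ∈ F^n`. -/
def RepSet {F : Type*} [Field F] {s n : ℕ} (S D : Set (Fin s → Fin n → F)) : Prop :=
  D ⊆ S ∧ ∀ σ ∈ S, ∃! dv : (Fin s → Fin n → F) × (Fin n → F),
    dv.1 ∈ D ∧ σ = fun i => dv.1 i + dv.2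

/-- The vectorized representative set `D̃ ⊆ F^{sn}` (identifying `(F^n)^s ≃ F^{sn}`). -/
def vecD {F : Type*} [Field F] {s n : ℕ} (D : Set (Fin s → Fin n → F)) :
    Set (Fin s × Fin n → F) :=
  (fun d (p : Fin s × Fin n) => d p.1 p.2) '' D

/-- The parent matrix `P = [Q_1 | ⋯ | Q_s]`. -/
def parentMatrix {F : Type*} [Field F] {s n r : ℕ}
    (Q : Fin s → Matrix (Fin r) (Fin n) F) : Matrix (Fin r) (Fin s × Fin n) F :=
  Matrix.of fun k p => Q p.1 k p.2

/-- `(H_1, …, H_s)` is a lossless linear compression of `S`: the joint encoding map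
`(x_1,…,x_s) ↦ (H_1 x_1, …, H_s x_s)` is injective on `S`. -/
def Lossless {F : Type*} [Field F] {s n : ℕ} {m : Fin s → ℕ}
    (H : ∀ i, Matrix (Fin (m i)) (Fin n) F) (S : Set (Fin s → Fin n → F)) : Prop :=
  Set.InjOn (fun x (i : Fin s) => (H i).mulVec (x i)) S

lemma sum_mulVec_add_const {ι R : Type*} [Fintype ι] [NonUnitalNonAssocSemiring R]
    {r n : ℕ} {Q : ι → Matrix (Fin r) (Fin n) R} (hQ0 : ∑ i, Q i = 0)
    (a : ι → Fin n → R) (v : Fin n → R) :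
    ∑ i, Q i *ᵥ (a i + v) = ∑ i, Q i *ᵥ a i := by
  simp [mulVec_add, Finset.sum_add_distrib, ← sum_mulVec, hQ0]

section ParentMatrix

variable {F : Type*} [Field F] {s n r : ℕ}

lemma parentMatrix_mulVec (Q : Fin s → Matrix (Fin r) (Fin n) F) (a : Fin s → Fin n → F) :
    parentMatrix Q *ᵥ (fun p => a p.1 p.2) = ∑ i, Q i *ᵥ a i := by
  ext k
  simp [parentMatrix, mulVec, dotProduct, Fintype.sum_prod_type]

/-- The blocks of `P` sum to zero, so `P` does not see the common shift `v`. -/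
lemma eq_of_forall_mulVec_eq {Q : Fin s → Matrix (Fin r) (Fin n) F} (hQ0 : ∑ i, Q i = 0)
    {D : Set (Fin s → Fin n → F)} (hPinj : Set.InjOn (parentMatrix Q).mulVec (vecD D))
    {d e : Fin s → Fin n → F} (hd : d ∈ D) (he : e ∈ D) {v w : Fin n → F}
    (hQ : ∀ i, Q i *ᵥ (d i + v) = Q i *ᵥ (e i + w)) : d = e := by
  have hvec : (fun p : Fin s × Fin n => d p.1 p.2) = fun p => e p.1 p.2 := by
    refine hPinj ⟨d, hd, rfl⟩ ⟨e, he, rfl⟩ ?_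
    rw [parentMatrix_mulVec, parentMatrix_mulVec, ← sum_mulVec_add_const hQ0 d v,
      ← sum_mulVec_add_const hQ0 e w]
    exact Finset.sum_congr rfl fun i _ => hQ i
  funext i j
  exact congrFun hvec (i, j)

end ParentMatrix

lemma RepSet.exists_eq_shift {F : Type*} [Field F] {s n : ℕ} {S D : Set (Fin s → Fin n → F)}
    (hRep : RepSet S D) {x : Fin s → Fin n → F} (hx : x ∈ S) :
    ∃ d ∈ D, ∃ v : Fin n → F, x = fun i => d i + v := by
  obtain ⟨⟨d, v⟩, ⟨hd, rfl⟩, -⟩ := hRep.2 x hx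
  exact ⟨d, hd, v, rfl⟩

theorem stmt_0_general {F : Type*} [Field F] {s n : ℕ}
    (S D : Set (Fin s → Fin n → F)) (hRep : RepSet S D)
    {r : ℕ} (Q : Fin s → Matrix (Fin r) (Fin n) F)
    (hQ0 : ∑ i, Q i = 0)
    (hPinj : Set.InjOn (parentMatrix Q).mulVec (vecD D))
    {t : Fin s → ℕ} (G' : ∀ i, Matrix (Fin (t i)) (Fin n) F)
    (hstack : ∀ v : Fin n → F,
      (∀ i, (Q i).mulVec v = 0) → (∀ i, (G' i).mulVec v = 0) → v = 0)
    {m : Fin s → ℕ} (H : ∀ i, Matrix (Fin (m i)) (Fin n) F)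
    (hker : ∀ i (v : Fin n → F),
      (H i).mulVec v = 0 ↔ ((G' i).mulVec v = 0 ∧ (Q i).mulVec v = 0)) :
    Lossless H S := by
  intro x hx y hy hxy
  have hdiff : ∀ i, G' i *ᵥ (x i - y i) = 0 ∧ Q i *ᵥ (x i - y i) = 0 := fun i =>
    (hker i _).1 (by rw [mulVec_sub, sub_eq_zero]; exact congrFun hxy i)
  obtain ⟨d, hd, v, rfl⟩ := hRep.exists_eq_shift hx
  obtain ⟨e, he, w, rfl⟩ := hRep.exists_eq_shift hy
  obtain rfl : d = e := eq_of_forall_mulVec_eq hQ0 hPinj hd he fun i =>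
    sub_eq_zero.1 (by rw [← mulVec_sub]; exact (hdiff i).2)
  simp only [add_sub_add_left_eq_sub] at hdiff
  obtain rfl : v = w := sub_eq_zero.1 <|
    hstack _ (fun i => (hdiff i).2) (fun i => (hdiff i).1)
  rfl

/-- Pre-Matrix Partition Codes are lossless linear compressions. -/
theorem stmt_0 {F : Type*} [Field F] {s n : ℕ} (hs : 2 ≤ s) (hn : 1 ≤ n)
    (S D : Set (Fin s → Fin n → F)) (hSym : DevSym S) (hRep : RepSet S D)
    {r : ℕ} (Q : Fin s → Matrix (Fin r) (Fin n) F)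
    (hQ0 : ∑ i, Q i = 0)
    (hPinj : Set.InjOn (parentMatrix Q).mulVec (vecD D))
    {t : Fin s → ℕ} (G' : ∀ i, Matrix (Fin (t i)) (Fin n) F)
    (hstack : ∀ v : Fin n → F,
      (∀ i, (Q i).mulVec v = 0) → (∀ i, (G' i).mulVec v = 0) → v = 0)
    {m : Fin s → ℕ} (H : ∀ i, Matrix (Fin (m i)) (Fin n) F)
    (hker : ∀ i (v : Fin n → F),
      (H i).mulVec v = 0 ↔ ((G' i).mulVec v = 0 ∧ (Q i).mulVec v = 0)) :
    Lossless H S :=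
  stmt_0_general S D hRep Q hQ0 hPinj G' hstack H hker
end

section
/- Let P = [Q_1 | ⋯ | Q_s] be an r × sn parent matrix for (S, D), let T' be a t × n matrix such that the stacked matrix (Q_1; ⋯ ; Q_s; T') has trivial kernel, let T' be partitioned into G'_1, …, G'_s, and let H_1, …, H_s be matrices with n columns and m_1, …, m_s rows respectively such that ker H_i equals the kernel of the stacked matrix (G'_i; Q_i) for every i. Then m_i ≥ rank Q_i for every i, and the sum over i of (m_i − rank Q_i) is at least n − rank(Q_1; ⋯ ; Q_s), where (Q_1; ⋯ ; Q_s) denotes the vertical stack of Q_1, …, Q_s. Consequently the total code length satisfies M = m_1 + ⋯ + m_s ≥ rank Q_1 + ⋯ + rank Q_s + n − rank(Q_1; ⋯ ; Q_s). -/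
/-!
Put `K_i = ker Q_i` and `W = ⋂ K_i = ker (Q_1; ⋯; Q_s)`. Since `ker H_i = K_i ∩ ker G'_i ⊆ K_i`,
the image `H_i K_i` has dimension `rank H_i - rank Q_i`, which gives `rank Q_i ≤ rank H_i ≤ m_i`.
The trivial kernel of `(Q_1; ⋯; Q_s; T')` says that `v ↦ (H_1 v, …, H_s v)` is injective on `W`,
and it maps `W` into `∏ H_i K_i`; hence `n - rank (Q_1; ⋯; Q_s) = dim W ≤ ∑ (m_i - rank Q_i)`.
-/

open Matrix

open Module

theorem Submodule.finrank_le_sum_finrank_map_of_disjoint_iInf_ker {K V : Type*} {ι : Type*}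
    [Fintype ι] [Field K] [AddCommGroup V] [Module K V] [FiniteDimensional K V]
    {V' : ι → Type*} [∀ i, AddCommGroup (V' i)] [∀ i, Module K (V' i)]
    (f : ∀ i, V →ₗ[K] V' i) (W : Submodule K V)
    (hW : Disjoint W (⨅ i, LinearMap.ker (f i))) :
    finrank K W ≤ ∑ i, finrank K (W.map (f i)) := by
  rw [← Module.finrank_pi_fintype]
  refine LinearMap.finrank_le_finrank_of_injective
    (f := LinearMap.pi fun i => (f i).submoduleMap W) ?_
  rw [← LinearMap.ker_eq_bot, eq_bot_iff]
  intro v hv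
  have hfv : ∀ i, f i v = 0 := fun i => congrArg Subtype.val (congrFun hv i)
  have : (v : V) = 0 := (Submodule.disjoint_def.mp hW) v v.2 (Submodule.mem_iInf _ |>.mpr hfv)
  simpa using this

theorem LinearMap.finrank_map_add_finrank_eq_of_ker_le {K V V' : Type*} [Field K]
    [AddCommGroup V] [Module K V] [FiniteDimensional K V] [AddCommGroup V'] [Module K V']
    (f : V →ₗ[K] V') {U : Submodule K V} (hU : LinearMap.ker f ≤ U) :
    finrank K (U.map f) + finrank K V = finrank K U + finrank K (LinearMap.range f) := by
  have hU' := (f ∘ₗ U.subtype).finrank_range_add_finrank_ker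
  rw [LinearMap.range_comp, Submodule.range_subtype, LinearMap.ker_comp,
    (Submodule.comapSubtypeEquivOfLe hU).finrank_eq] at hU'
  have hf := f.finrank_range_add_finrank_ker
  omega

namespace Matrix

variable {F : Type*} [Field F] {l m n : Type*} [Fintype n]

theorem rank_add_finrank_ker_mulVecLin (A : Matrix m n F) :
    A.rank + finrank F (LinearMap.ker A.mulVecLin) = Fintype.card n := by
  rw [← Module.finrank_fintype_fun_eq_card (R := F)]
  exact A.mulVecLin.finrank_range_add_finrank_ker

theorem finrank_map_ker_mulVecLin_add_rank {A : Matrix l n F} {B : Matrix m n F}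
    (h : LinearMap.ker A.mulVecLin ≤ LinearMap.ker B.mulVecLin) :
    finrank F ((LinearMap.ker B.mulVecLin).map A.mulVecLin) + B.rank = A.rank := by
  have hmap := A.mulVecLin.finrank_map_add_finrank_eq_of_ker_le h
  have hB := B.rank_add_finrank_ker_mulVecLin
  rw [Module.finrank_fintype_fun_eq_card] at hmap
  unfold rank at hB ⊢
  omega

theorem mem_ker_mulVecLin_stack_iff {ι r : Type*}
    (Q : ι → Matrix r n F) (v : n → F) :
    v ∈ LinearMap.ker (Matrix.of fun (q : ι × r) j => Q q.1 q.2 j).mulVecLin ↔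
      ∀ i, v ∈ LinearMap.ker (Q i).mulVecLin := by
  simp only [LinearMap.mem_ker, mulVecLin_apply, funext_iff, Prod.forall]
  rfl

end Matrix

theorem stmt_1_general {F : Type*} [Field F] {s n : ℕ}
    {r : ℕ} (Q : Fin s → Matrix (Fin r) (Fin n) F)
    {t : Fin s → ℕ} (G' : ∀ i, Matrix (Fin (t i)) (Fin n) F)
    (hstack : ∀ v : Fin n → F,
      (∀ i, (Q i).mulVec v = 0) → (∀ i, (G' i).mulVec v = 0) → v = 0)
    {m : Fin s → ℕ} (H : ∀ i, Matrix (Fin (m i)) (Fin n) F)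
    (hker : ∀ i (v : Fin n → F),
      (H i).mulVec v = 0 ↔ ((G' i).mulVec v = 0 ∧ (Q i).mulVec v = 0)) :
    (∀ i, (Q i).rank ≤ m i) ∧
    (n - (Matrix.of fun (q : Fin s × Fin r) (j : Fin n) => Q q.1 q.2 j :
        Matrix (Fin s × Fin r) (Fin n) F).rank ≤ ∑ i, (m i - (Q i).rank)) ∧
    ((∑ i, (Q i).rank) +
        (n - (Matrix.of fun (q : Fin s × Fin r) (j : Fin n) => Q q.1 q.2 j :
          Matrix (Fin s × Fin r) (Fin n) F).rank) ≤ ∑ i, m i) := by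
  set P : Matrix (Fin s × Fin r) (Fin n) F := Matrix.of fun q j => Q q.1 q.2 j
  have hmap i := finrank_map_ker_mulVecLin_add_rank (A := H i) (B := Q i)
    fun v hv => ((hker i v).mp hv).2
  have hHm i : (H i).rank ≤ m i := by simpa using (H i).rank_le_card_height
  have hQm i : (Q i).rank ≤ m i := by have := hmap i; have := hHm i; omega
  have hdisj : Disjoint (LinearMap.ker P.mulVecLin) (⨅ i, LinearMap.ker (H i).mulVecLin) := by
    refine Submodule.disjoint_def.mpr fun v hvP hvH => hstack v (fun i => ?_) fun i => ?_
    · exact (mem_ker_mulVecLin_stack_iff Q v).mp hvP i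
    · exact ((hker i v).mp (Submodule.mem_iInf _ |>.mp hvH i)).1
  have hdimW := Submodule.finrank_le_sum_finrank_map_of_disjoint_iInf_ker _ _ hdisj
  have hWle i : finrank F ((LinearMap.ker P.mulVecLin).map (H i).mulVecLin) ≤ m i - (Q i).rank :=
    calc _ ≤ finrank F ((LinearMap.ker (Q i).mulVecLin).map (H i).mulVecLin) :=
          Submodule.finrank_mono <| Submodule.map_mono fun v hv =>
            (mem_ker_mulVecLin_stack_iff Q v).mp hv i
      _ ≤ m i - (Q i).rank := by have := hmap i; have := hHm i; omega
  have hrankP := P.rank_add_finrank_ker_mulVecLin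
  rw [Fintype.card_fin] at hrankP
  have hgap : n - P.rank ≤ ∑ i, (m i - (Q i).rank) := by
    have := Finset.sum_le_sum fun i (_ : i ∈ Finset.univ) => hWle i
    omega
  refine ⟨hQm, hgap, ?_⟩
  calc _ ≤ ∑ i, (Q i).rank + ∑ i, (m i - (Q i).rank) := Nat.add_le_add_left hgap _
    _ = ∑ i, m i := by
      rw [← Finset.sum_add_distrib]
      exact Finset.sum_congr rfl fun i _ => Nat.add_sub_of_le (hQm i)

/-- rank bounds for Pre-Matrix Partition Codes, and the resulting
lower bound on the total code length `M = m_1 + ⋯ + m_s`. -/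
theorem stmt_1 {F : Type*} [Field F] {s n : ℕ} (hs : 2 ≤ s) (hn : 1 ≤ n)
    (S D : Set (Fin s → Fin n → F)) (hSym : DevSym S) (hRep : RepSet S D)
    {r : ℕ} (Q : Fin s → Matrix (Fin r) (Fin n) F)
    (hQ0 : ∑ i, Q i = 0)
    (hPinj : Set.InjOn (parentMatrix Q).mulVec (vecD D))
    {t : Fin s → ℕ} (G' : ∀ i, Matrix (Fin (t i)) (Fin n) F)
    (hstack : ∀ v : Fin n → F,
      (∀ i, (Q i).mulVec v = 0) → (∀ i, (G' i).mulVec v = 0) → v = 0)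
    {m : Fin s → ℕ} (H : ∀ i, Matrix (Fin (m i)) (Fin n) F)
    (hker : ∀ i (v : Fin n → F),
      (H i).mulVec v = 0 ↔ ((G' i).mulVec v = 0 ∧ (Q i).mulVec v = 0)) :
    (∀ i, (Q i).rank ≤ m i) ∧
    (n - (Matrix.of fun (q : Fin s × Fin r) (j : Fin n) => Q q.1 q.2 j :
        Matrix (Fin s × Fin r) (Fin n) F).rank ≤ ∑ i, (m i - (Q i).rank)) ∧
    ((∑ i, (Q i).rank) +
        (n - (Matrix.of fun (q : Fin s × Fin r) (j : Fin n) => Q q.1 q.2 j :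
          Matrix (Fin s × Fin r) (Fin n) F).rank) ≤ ∑ i, m i) :=
  stmt_1_general Q G' hstack H hker
end

section
/- Let P = [Q_1 | ⋯ | Q_s] be an r × sn parent matrix for (S, D). For any nonnegative integers r_1, …, r_s satisfying r_1 + ⋯ + r_s ≥ n − rank(Q_1; ⋯ ; Q_s), where (Q_1; ⋯ ; Q_s) denotes the vertical stack of Q_1, …, Q_s, there exist matrices H_1, …, H_s over F, where H_i has exactly rank Q_i + r_i rows and n columns, forming a lossless linear compression of S. -/
open Matrix

/-!
Write `x_i = d_i + v` with `d ∈ D`. Because the blocks `Q_i` sum to zero, the shift `v` is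
invisible to `∑ Q_i x_i = P d̃`, so knowing every `Q_i x_i` determines the representative `d`.
Once `d` is known, every component reveals `v` through its own encoder, so it suffices that
the encoders jointly have trivial kernel. Hence take `H_i = [A_i; B_i]`, where `A_i` has
`rank Q_i` rows and the kernel of `Q_i`, and the rows of the `B_i` together cut
`ker(Q_1; ⋯; Q_s)`, of dimension `n - rank(Q_1; ⋯; Q_s) ≤ ∑ r_i`, down to zero.
-/

namespace Matrix

variable {F : Type*} [Field F] {m n : Type*} [Fintype n]

theorem exists_rank_rows_ker_eq [DecidableEq n] (Q : Matrix m n F) :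
    ∃ A : Matrix (Fin Q.rank) n F, LinearMap.ker A.mulVecLin = LinearMap.ker Q.mulVecLin := by
  let e : LinearMap.range Q.mulVecLin ≃ₗ[F] (Fin Q.rank → F) :=
    LinearEquiv.ofFinrankEq _ _ (Module.finrank_fin_fun F).symm
  refine ⟨LinearMap.toMatrix' (e.toLinearMap ∘ₗ Q.mulVecLin.rangeRestrict), ?_⟩
  rw [← Matrix.toLin'_apply', Matrix.toLin'_toMatrix', LinearEquiv.ker_comp,
    LinearMap.ker_rangeRestrict]

theorem exists_ker_disjoint [DecidableEq n] (M : Matrix m n F) {ι : Type*} [Fintype ι]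
    (h : Fintype.card n - M.rank ≤ Fintype.card ι) :
    ∃ B : Matrix ι n F, Disjoint (LinearMap.ker M.mulVecLin) (LinearMap.ker B.mulVecLin) := by
  have hK : Module.finrank F (LinearMap.ker M.mulVecLin) ≤ Module.finrank F (ι → F) := by
    have hnullity := LinearMap.finrank_range_add_finrank_ker M.mulVecLin
    simp only [Module.finrank_fintype_fun_eq_card] at hnullity ⊢
    rw [rank] at h
    omega
  obtain ⟨g, hg⟩ := finrank_le_iff_exists_linearMap.mp hK
  obtain ⟨g', hg'⟩ := LinearMap.exists_extend g
  refine ⟨LinearMap.toMatrix' g', Submodule.disjoint_def.mpr fun u hM hB => ?_⟩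
  rw [← Matrix.toLin'_apply', Matrix.toLin'_toMatrix', LinearMap.mem_ker] at hB
  have : g ⟨u, hM⟩ = g 0 := by rw [← hg', map_zero]; exact hB
  simpa using hg this

theorem mulVec_of_append {a b : ℕ} (A : Matrix (Fin a) n F) (B : Matrix (Fin b) n F)
    (u : n → F) : of (Fin.append A B) *ᵥ u = Fin.append (A *ᵥ u) (B *ᵥ u) := by
  funext j
  refine Fin.addCases (fun i => ?_) (fun i => ?_) j
  · simp only [Fin.append_left]; exact congrArg (· ⬝ᵥ u) (Fin.append_left A B i)
  · simp only [Fin.append_right]; exact congrArg (· ⬝ᵥ u) (Fin.append_right A B i)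

theorem ker_mulVecLin_of_append {a b : ℕ} (A : Matrix (Fin a) n F) (B : Matrix (Fin b) n F) :
    LinearMap.ker (of (Fin.append A B)).mulVecLin =
      LinearMap.ker A.mulVecLin ⊓ LinearMap.ker B.mulVecLin := by
  ext u
  simp only [Submodule.mem_inf, LinearMap.mem_ker, mulVecLin_apply, mulVec_of_append, funext_iff,
    Fin.forall_fin_add, Fin.append_left, Fin.append_right, Pi.zero_apply]

theorem ker_mulVecLin_of_prod {ι κ : Type*} (Q : ι → Matrix κ n F) :
    LinearMap.ker (of fun q : ι × κ => Q q.1 q.2).mulVecLin =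
      ⨅ i, LinearMap.ker (Q i).mulVecLin := by
  ext u
  simp only [Submodule.mem_iInf, LinearMap.mem_ker, mulVecLin_apply, funext_iff, Prod.forall]
  rfl

theorem ker_mulVecLin_sigma {ι : Type*} {κ : ι → Type*} (B : Matrix (Σ i, κ i) n F) :
    LinearMap.ker B.mulVecLin = ⨅ i, LinearMap.ker (B.submatrix (Sigma.mk i) id).mulVecLin := by
  ext u
  simp only [Submodule.mem_iInf, LinearMap.mem_ker, mulVecLin_apply, funext_iff, Sigma.forall]
  rfl

end Matrix

theorem parentMatrix_mulVec_add_const {F : Type*} [Field F] {s n r : ℕ}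
    {Q : Fin s → Matrix (Fin r) (Fin n) F} (hQ0 : ∑ i, Q i = 0) (d : Fin s → Fin n → F)
    (v : Fin n → F) :
    parentMatrix Q *ᵥ (fun p => d p.1 p.2) = ∑ i, Q i *ᵥ (d i + v) := by
  have hv : ∑ i, Q i *ᵥ v = 0 := by rw [← sum_mulVec, hQ0, zero_mulVec]
  simp only [mulVec_add, Finset.sum_add_distrib, hv, add_zero]
  funext k
  simp only [parentMatrix, mulVec, dotProduct, of_apply, Finset.sum_apply,
    Fintype.sum_prod_type]

theorem lossless_of_ker {F : Type*} [Field F] {s n : ℕ} {S D : Set (Fin s → Fin n → F)}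
    (hRep : RepSet S D) {r : ℕ} {Q : Fin s → Matrix (Fin r) (Fin n) F} (hQ0 : ∑ i, Q i = 0)
    (hPinj : Set.InjOn (parentMatrix Q).mulVec (vecD D)) {m : Fin s → ℕ}
    {H : ∀ i, Matrix (Fin (m i)) (Fin n) F}
    (hHQ : ∀ i, LinearMap.ker (H i).mulVecLin ≤ LinearMap.ker (Q i).mulVecLin)
    (hH : ⨅ i, LinearMap.ker (H i).mulVecLin = ⊥) :
    Lossless H S := by
  intro x hx y hy hxy
  obtain ⟨⟨d, v⟩, ⟨hd, rfl⟩, -⟩ := hRep.2 x hx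
  obtain ⟨⟨e, w⟩, ⟨he, rfl⟩, -⟩ := hRep.2 y hy
  have hker : ∀ i, d i + v - (e i + w) ∈ LinearMap.ker (H i).mulVecLin := fun i => by
    simp only [LinearMap.mem_ker, mulVecLin_apply, mulVec_sub, congrFun hxy i, sub_self]
  have hQ : ∀ i, Q i *ᵥ (d i + v) = Q i *ᵥ (e i + w) := fun i => by
    simpa [mulVec_sub, sub_eq_zero] using hHQ i (hker i)
  obtain rfl : d = e := by
    have := hPinj ⟨d, hd, rfl⟩ ⟨e, he, rfl⟩ (by
      rw [parentMatrix_mulVec_add_const hQ0 d v, parentMatrix_mulVec_add_const hQ0 e w]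
      exact Finset.sum_congr rfl fun i _ => hQ i)
    funext i j
    exact congrFun this (i, j)
  have hvw : v - w ∈ ⨅ i, LinearMap.ker (H i).mulVecLin :=
    Submodule.mem_iInf _ |>.mpr fun i => by simpa using hker i
  rw [hH, Submodule.mem_bot, sub_eq_zero] at hvw
  rw [hvw]

theorem exists_blocks_ker_disjoint {F : Type*} [Field F] {s n : ℕ} {ι : Type*}
    (M : Matrix ι (Fin n) F) (rv : Fin s → ℕ) (h : n - M.rank ≤ ∑ i, rv i) :
    ∃ B : ∀ i, Matrix (Fin (rv i)) (Fin n) F,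
      Disjoint (LinearMap.ker M.mulVecLin) (⨅ i, LinearMap.ker (B i).mulVecLin) := by
  have hcard : Fintype.card (Fin n) - M.rank ≤ Fintype.card (Σ i, Fin (rv i)) := by
    simpa only [Fintype.card_sigma, Fintype.card_fin] using h
  obtain ⟨B, hB⟩ := M.exists_ker_disjoint hcard
  rw [ker_mulVecLin_sigma] at hB
  exact ⟨_, hB⟩

theorem stmt_2_general {F : Type*} [Field F] {s n : ℕ}
    (S D : Set (Fin s → Fin n → F)) (hRep : RepSet S D)
    {r : ℕ} (Q : Fin s → Matrix (Fin r) (Fin n) F)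
    (hQ0 : ∑ i, Q i = 0)
    (hPinj : Set.InjOn (parentMatrix Q).mulVec (vecD D))
    (rv : Fin s → ℕ)
    (hrv : n - (Matrix.of fun (q : Fin s × Fin r) (j : Fin n) => Q q.1 q.2 j :
        Matrix (Fin s × Fin r) (Fin n) F).rank ≤ ∑ i, rv i) :
    ∃ H : ∀ i, Matrix (Fin ((Q i).rank + rv i)) (Fin n) F, Lossless H S := by
  choose A hA using fun i => (Q i).exists_rank_rows_ker_eq
  obtain ⟨B, hB⟩ := exists_blocks_ker_disjoint _ rv hrv
  refine ⟨fun i => of (Fin.append (A i) (B i)), lossless_of_ker hRep hQ0 hPinj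
    (fun i => ?_) ?_⟩
  · rw [ker_mulVecLin_of_append, hA]
    exact inf_le_left
  · simp only [ker_mulVecLin_of_append, hA, iInf_inf_eq]
    rw [← ker_mulVecLin_of_prod]
    exact hB.eq_bot

/-- every row-count tuple allowed by the rank inequality of
Theorem 2.2 is achievable by a lossless linear compression (Corollary 1). -/
theorem stmt_2 {F : Type*} [Field F] {s n : ℕ} (hs : 2 ≤ s) (hn : 1 ≤ n)
    (S D : Set (Fin s → Fin n → F)) (hSym : DevSym S) (hRep : RepSet S D)
    {r : ℕ} (Q : Fin s → Matrix (Fin r) (Fin n) F)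
    (hQ0 : ∑ i, Q i = 0)
    (hPinj : Set.InjOn (parentMatrix Q).mulVec (vecD D))
    (rv : Fin s → ℕ)
    (hrv : n - (Matrix.of fun (q : Fin s × Fin r) (j : Fin n) => Q q.1 q.2 j :
        Matrix (Fin s × Fin r) (Fin n) F).rank ≤ ∑ i, rv i) :
    ∃ H : ∀ i, Matrix (Fin ((Q i).rank + rv i)) (Fin n) F, Lossless H S :=
  stmt_2_general S D hRep Q hQ0 hPinj rv hrv
end

section
/- Let D and E both be representative sets of the same source with deviation symmetry S, with vectorized versions D̃ and Ẽ in F^{sn}. If P = [Q_1 | ⋯ | Q_s] is an r × sn matrix over F with Q_1 + ⋯ + Q_s = 0 whose restriction to D̃ is injective, then the restriction of P to Ẽ is also injective. -/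
/-!
Since the blocks of `P` sum to zero, `P` kills every uniform shift `(v, …, v)`, so `P` takes the
same value on an element of `S` and on its representative in `D`. Two elements of `E` with the
same image therefore have the same representative in `D`, hence differ by a uniform shift, and
uniqueness of representatives in `E` forces them to be equal.
-/

open Matrix

theorem vecD_eq_image_uncurry {F : Type*} [Field F] {s n : ℕ} (D : Set (Fin s → Fin n → F)) :
    vecD D = Function.uncurry '' D :=
  rfl

theorem parentMatrix_mulVec_uncurry {F : Type*} [Field F] {s n r : ℕ}
    (Q : Fin s → Matrix (Fin r) (Fin n) F) (x : Fin s → Fin n → F) :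
    parentMatrix Q *ᵥ Function.uncurry x = ∑ i, Q i *ᵥ x i := by
  ext k
  simp only [mulVec, dotProduct, parentMatrix, of_apply, Function.uncurry_apply_pair,
    Fintype.sum_prod_type, Finset.sum_apply]

theorem parentMatrix_mulVec_uncurry_add_const {F : Type*} [Field F] {s n r : ℕ}
    {Q : Fin s → Matrix (Fin r) (Fin n) F} (hQ0 : ∑ i, Q i = 0)
    (x : Fin s → Fin n → F) (v : Fin n → F) :
    parentMatrix Q *ᵥ Function.uncurry (fun i => x i + v) =
      parentMatrix Q *ᵥ Function.uncurry x := by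
  simp only [parentMatrix_mulVec_uncurry, mulVec_add, Finset.sum_add_distrib,
    ← sum_mulVec, hQ0, zero_mulVec, add_zero]

theorem RepSet.eq_of_eq_add_const {F : Type*} [Field F] {s n : ℕ}
    {S E : Set (Fin s → Fin n → F)} (hE : RepSet S E) {e e' : Fin s → Fin n → F}
    (he : e ∈ E) (he' : e' ∈ E) {w : Fin n → F} (hw : e' = fun i => e i + w) : e = e' := by
  obtain ⟨_, -, huniq⟩ := hE.2 e' (hE.1 he')
  have h₁ := huniq (e, w) ⟨he, hw⟩
  have h₀ := huniq (e', 0) ⟨he', by simp⟩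
  exact congrArg Prod.fst (h₁.trans h₀.symm)

theorem stmt_3_general {F : Type*} [Field F] {s n : ℕ}
    (S D E : Set (Fin s → Fin n → F))
    (hRepD : RepSet S D) (hRepE : RepSet S E)
    {r : ℕ} (Q : Fin s → Matrix (Fin r) (Fin n) F)
    (hQ0 : ∑ i, Q i = 0)
    (hPinj : Set.InjOn (parentMatrix Q).mulVec (vecD D)) :
    Set.InjOn (parentMatrix Q).mulVec (vecD E) := by
  rw [vecD_eq_image_uncurry] at hPinj ⊢
  rintro _ ⟨e, he, rfl⟩ _ ⟨e', he', rfl⟩ himage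
  obtain ⟨⟨d, v⟩, ⟨hd, hed⟩, -⟩ := hRepD.2 e (hRepE.1 he)
  obtain ⟨⟨d', v'⟩, ⟨hd', hed'⟩, -⟩ := hRepD.2 e' (hRepE.1 he')
  have hdd' : d = d' := by
    refine Function.uncurry_injective (hPinj ⟨d, hd, rfl⟩ ⟨d', hd', rfl⟩ ?_)
    simpa only [hed, hed', parentMatrix_mulVec_uncurry_add_const hQ0] using himage
  subst hdd'
  refine congrArg Function.uncurry (hRepE.eq_of_eq_add_const he he' (w := v' - v) ?_)
  rw [hed, hed']
  ext i j
  simp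

/-- a parent matrix for one representative set of `S` is injective on the
vectorization of any other representative set of `S` (Theorem 2.3). -/
theorem stmt_3 {F : Type*} [Field F] {s n : ℕ} (hs : 2 ≤ s) (hn : 1 ≤ n)
    (S D E : Set (Fin s → Fin n → F)) (hSym : DevSym S)
    (hRepD : RepSet S D) (hRepE : RepSet S E)
    {r : ℕ} (Q : Fin s → Matrix (Fin r) (Fin n) F)
    (hQ0 : ∑ i, Q i = 0)
    (hPinj : Set.InjOn (parentMatrix Q).mulVec (vecD D)) :
    Set.InjOn (parentMatrix Q).mulVec (vecD E) :=
  stmt_3_general S D E hRepD hRepE Q hQ0 hPinj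
end

section
/- (Nullspace shifting) Let S be a source with deviation symmetry in (F^n)^s, let π be a permutation of {1,…,s}, and let K, N_1, …, N_s be linear subspaces of F^n with K ∩ N_i = {0} for all i. Suppose H_1, …, H_s are matrices over F with n columns such that ker H_{π(i)} = K + N_i for 1 ≤ i ≤ s−1 and ker H_{π(s)} = N_s, and suppose H'_1, …, H'_s are matrices over F with n columns such that ker H'_{π(1)} = N_1 and ker H'_{π(i)} = K + N_i for 2 ≤ i ≤ s. If H_1, …, H_s form a lossless linear compression of S, then H'_1, …, H'_s also form a lossless linear compression of S. -/
/-!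
Let `x, y ∈ S` have the same `H'`-encoding. The difference at terminal `π(s)` lies in
`K + N_s`, say `k + r` with `k ∈ K`, `r ∈ N_s`. Then `x` and the shifted tuple `y + k ∈ S`
have the same `H`-encoding (every other `H`-kernel contains `K` and the `H'`-kernel at the
same terminal), so `x = y + k` by losslessness of `H`. At terminal `π(1)` the difference
`k` then lies in `K ∩ N_1 = 0`.
-/

open Matrix

open Submodule

def Separates {ι R V : Type*} [Ring R] [AddCommGroup V] [Module R V]
    (U : ι → Submodule R V) (S : Set (ι → V)) : Prop :=
  ∀ x ∈ S, ∀ y ∈ S, (∀ i, x i - y i ∈ U i) → x = y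

theorem lossless_iff_separates_ker {F : Type*} [Field F] {s n : ℕ} {m : Fin s → ℕ}
    (H : ∀ i, Matrix (Fin (m i)) (Fin n) F) (S : Set (Fin s → Fin n → F)) :
    Lossless H S ↔ Separates (fun i => LinearMap.ker (H i).mulVecLin) S := by
  simp only [Lossless, Set.InjOn, Separates, funext_iff, LinearMap.sub_mem_ker_iff,
    Matrix.mulVecLin_apply]

theorem Separates.of_shift {ι R V : Type*} [Ring R] [AddCommGroup V] [Module R V]
    {S : Set (ι → V)} (hS : ∀ x ∈ S, ∀ v : V, (fun i => x i + v) ∈ S)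
    {U U' : ι → Submodule R V} {K : Submodule R V} {a b : ι}
    (hle : ∀ j ≠ b, U' j ≤ U j) (hK : ∀ j ≠ b, K ≤ U j)
    (hb : U' b ≤ K ⊔ U b) (ha : U' a ⊓ K = ⊥) (hU : Separates U S) :
    Separates U' S := by
  intro x hx y hy hxy
  obtain ⟨k, hk, r, hr, hkr⟩ := mem_sup.mp (hb (hxy b))
  have hx_shift : x = fun i => y i + k := hU x hx _ (hS y hy k) fun j => by
    rw [← sub_sub]
    by_cases hj : j = b
    · subst hj
      rwa [← hkr, add_sub_cancel_left]
    · exact sub_mem (hle j hj (hxy j)) (hK j hj hk)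
  have hk_zero : k = 0 := by
    have hka : k ∈ U' a ⊓ K := ⟨by simpa [hx_shift] using hxy a, hk⟩
    simpa [ha] using hka
  simpa [hk_zero] using hx_shift

/-- Nullspace shifting, Theorem 8.1: moving the common kernel summand `K`
from the first `s-1` terminals (in the order given by `π`) to the last `s-1` terminals
preserves losslessness.  Indices `1,…,s` are represented by `Fin s` (so `i = 0`
corresponds to terminal `1` and `i = s-1` to terminal `s`). -/
theorem stmt_5 {F : Type*} [Field F] {s n : ℕ} (hs : 2 ≤ s)
    (S : Set (Fin s → Fin n → F)) (hSym : DevSym S)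
    (K : Submodule F (Fin n → F)) (N : Fin s → Submodule F (Fin n → F))
    (hKN : ∀ i, K ⊓ N i = ⊥)
    (π : Equiv.Perm (Fin s))
    {m : Fin s → ℕ} (H : ∀ i, Matrix (Fin (m i)) (Fin n) F)
    {m' : Fin s → ℕ} (H' : ∀ i, Matrix (Fin (m' i)) (Fin n) F)
    (hH1 : ∀ i : Fin s, i.val < s - 1 →
      LinearMap.ker (H (π i)).mulVecLin = K ⊔ N i)
    (hH2 : LinearMap.ker (H (π ⟨s - 1, by omega⟩)).mulVecLin = N ⟨s - 1, by omega⟩)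
    (hH'1 : LinearMap.ker (H' (π ⟨0, by omega⟩)).mulVecLin = N ⟨0, by omega⟩)
    (hH'2 : ∀ i : Fin s, 0 < i.val →
      LinearMap.ker (H' (π i)).mulVecLin = K ⊔ N i)
    (hLoss : Lossless H S) :
    Lossless H' S := by
  rw [lossless_iff_separates_ker] at hLoss ⊢
  have hker_of_ne_last : ∀ j ≠ π ⟨s - 1, by omega⟩, ∃ i : Fin s, j = π i ∧
      LinearMap.ker (H (π i)).mulVecLin = K ⊔ N i := by
    intro j hj
    obtain ⟨i, rfl⟩ := π.surjective j
    have hi : i.val ≠ s - 1 := fun h => hj (congrArg π (Fin.ext h))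
    exact ⟨i, rfl, hH1 i (by omega)⟩
  refine hLoss.of_shift hSym (K := K) (a := π ⟨0, by omega⟩) (b := π ⟨s - 1, by omega⟩)
    ?_ ?_ ?_ ?_
  · intro j hj
    obtain ⟨i, rfl, hker⟩ := hker_of_ne_last j hj
    rw [hker]
    rcases Nat.eq_zero_or_pos i.val with hi | hi
    · rw [show i = ⟨0, by omega⟩ from Fin.ext hi, hH'1]
      exact le_sup_right
    · exact (hH'2 i hi).le
  · intro j hj
    obtain ⟨i, rfl, hker⟩ := hker_of_ne_last j hj
    exact hker ▸ le_sup_left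
  · rw [hH'2 _ (by dsimp only; omega), hH2]
  · rw [hH'1, inf_comm, hKN]
end

section
/- Let S be a source with deviation symmetry in (F^n)^s with representative set D and vectorized representative set D̃ ⊆ F^{sn}, and suppose H_1, …, H_s form a lossless linear compression of S. Define the linear maps X : F^{sn} → F^{(s−1)n} by X(x_1,…,x_s) = (x_1 − x_2, x_2 − x_3, …, x_{s−1} − x_s) and J : F^{sn} → F^{m_1} × ⋯ × F^{m_s} by J(x_1,…,x_s) = (H_1x_1, …, H_sx_s), and define the two-terminal source S' = {(v, v + d) : v ∈ F^{sn}, d ∈ D̃} ⊆ F^{sn} × F^{sn}. Then the map (x, y) ↦ (Xx, Jy) is injective on S'; that is, (X, J) is a lossless linear compression of S'. -/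
open Matrix

/-!
The successive differences `X v` determine `v` up to a shift `w` common to all blocks, and `J`
is additive, so for two points `(v, v + d)`, `(v + w, v + w + d')` of `S'` with the same image,
`d` and `d' + w` have equal encodings. Both lie in `S` by deviation
symmetry, so losslessness gives `d = d' + w`, and uniqueness of the representation forces
`d = d'` and `w = 0`.
-/

theorem exists_eq_add_const_of_sub_succ_eq {G : Type*} [AddCommGroup G] {s : ℕ}
    {a b : Fin s → G}
    (h : ∀ k (hk : k + 1 < s), a ⟨k, by omega⟩ - a ⟨k + 1, hk⟩ = b ⟨k, by omega⟩ - b ⟨k + 1, hk⟩) :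
    ∃ w, ∀ i, b i = a i + w := by
  cases s with
  | zero => exact ⟨0, fun i => i.elim0⟩
  | succ s =>
    refine ⟨b 0 - a 0, fun ⟨k, hk⟩ => ?_⟩
    induction k with
    | zero => simp
    | succ k ih =>
      calc b ⟨k + 1, hk⟩ = b ⟨k, by omega⟩ - (b ⟨k, by omega⟩ - b ⟨k + 1, hk⟩) := by abel
        _ = a ⟨k, by omega⟩ + (b 0 - a 0) - (a ⟨k, by omega⟩ - a ⟨k + 1, hk⟩) := by
          rw [h k hk, ih]
        _ = a ⟨k + 1, hk⟩ + (b 0 - a 0) := by abel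

theorem RepSet.eq_and_eq_zero_of_eq_shift {F : Type*} [Field F] {s n : ℕ}
    {S D : Set (Fin s → Fin n → F)} (hRep : RepSet S D) {d d' : Fin s → Fin n → F}
    (hd : d ∈ D) (hd' : d' ∈ D) {w : Fin n → F} (h : d = fun i => d' i + w) :
    d' = d ∧ w = 0 := by
  obtain ⟨_, -, huniq⟩ := hRep.2 d (hRep.1 hd)
  exact Prod.ext_iff.mp <| (huniq (d', w) ⟨hd', h⟩).trans (huniq (d, 0) ⟨hd, by simp⟩).symm

/-- Lemma 9: the pair `(X, J)`, where `X` takes successive differences and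
`J` applies the given encoders blockwise, is a lossless linear compression of the
two-terminal source `S' = {(v, v + d) : v ∈ F^{sn}, d ∈ D̃}`. -/
theorem stmt_6 {F : Type*} [Field F] {s n : ℕ}
    (S D : Set (Fin s → Fin n → F)) (hSym : DevSym S) (hRep : RepSet S D)
    {m : Fin s → ℕ} (H : ∀ i, Matrix (Fin (m i)) (Fin n) F)
    (hLoss : Lossless H S) :
    Set.InjOn
      (fun p : (Fin s × Fin n → F) × (Fin s × Fin n → F) =>
        ((fun q : Fin (s - 1) × Fin n =>
            p.1 (⟨q.1.val, by omega⟩, q.2) - p.1 (⟨q.1.val + 1, by omega⟩, q.2)),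
         (fun i : Fin s => (H i).mulVec (fun j => p.2 (i, j)))))
      {p : (Fin s × Fin n → F) × (Fin s × Fin n → F) |
        ∃ v : Fin s × Fin n → F, ∃ d ∈ vecD D, p = (v, v + d)} := by
  rintro _ ⟨u, _, ⟨d, hd, rfl⟩, rfl⟩ _ ⟨u', _, ⟨d', hd', rfl⟩, rfl⟩ heq
  obtain ⟨hX, hJ⟩ := Prod.ext_iff.mp heq
  obtain ⟨w, hw⟩ : ∃ w, ∀ i, Function.curry u' i = Function.curry u i + w :=
    exists_eq_add_const_of_sub_succ_eq fun k hk =>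
      funext fun j => congrFun hX (⟨k, by omega⟩, j)
  have hJd : ∀ i, H i *ᵥ d i = H i *ᵥ (d' i + w) := fun i => by
    have hJi : H i *ᵥ (Function.curry u i + d i) = H i *ᵥ (Function.curry u' i + d' i) :=
      congrFun hJ i
    rw [hw, add_assoc, add_comm w, mulVec_add, mulVec_add] at hJi
    exact add_left_cancel hJi
  obtain ⟨rfl, rfl⟩ := hRep.eq_and_eq_zero_of_eq_shift hd hd'
    (hLoss (hRep.1 hd) (hSym d' (hRep.1 hd') w) (funext hJd))
  obtain rfl : u' = u := funext fun p => by simpa using congrFun (hw p.1) p.2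
  rfl
end

section
/- Let F be a finite field, L a nonempty subset of F not containing 0, s ≥ 2 and n ≥ 1 integers, and r ≥ 1 an integer such that |F|^r = 1 + |L|·s·n. Let D̃ = {λ·e_i : λ ∈ L ∪ {0}, 1 ≤ i ≤ sn} ⊆ F^{sn}, where e_1, …, e_{sn} is the standard basis of F^{sn}. Then there exists an r × sn matrix P over F whose restriction to D̃ is a bijection from D̃ onto F^r if and only if |L| divides |F| − 1 and there exist distinct elements a_1, …, a_k of F, with k = (|F| − 1)/|L|, such that F \ {0} = {a_i·λ : 1 ≤ i ≤ k, λ ∈ L}. -/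
/-!
Write `c_j = P e_j` for the columns of `P`. As `P 0 = 0`, the restriction of `P` to `D̃` is a
bijection onto `F^r` exactly when `(λ, j) ↦ λ • c_j` is a bijection from `L × [sn]` onto the
nonzero vectors of `F^r`.

Given such columns and a vector `u ≠ 0`, let `A` be the set of scalars `a` for which `a • u` is
a column: each `μ • u` with `μ ≠ 0` is `λ • c_j` for exactly one `(λ, j)`, i.e. `μ = a λ` for
exactly one `(a, λ) ∈ A × L`. Counting then gives `|A|·|L| = |F| - 1`.

Conversely, if every element of `Fˣ` is uniquely a product `a λ` with `a ∈ A`, `λ ∈ L`, take as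
columns the vectors `a • p`, with `a ∈ A` and `p` running over representatives of the points of
the projective space `ℙ(F^r)`. There are `|A|·|ℙ(F^r)| = (|F|^r - 1)/|L| = sn` of them.
-/

open Set
open scoped LinearAlgebra.Projectivization

section Factorization

variable {F : Type*} [Field F]

lemma ncard_setOf_ne_zero [Finite F] : {b : F | b ≠ 0}.ncard = Nat.card F - 1 := by
  rw [← compl_singleton_eq, ncard_compl, ncard_singleton]

lemma ncard_mul_ncard_eq_of_bijOn_mul [Finite F] {A L : Set F}
    (h : BijOn (fun p : F × F => p.1 * p.2) (A ×ˢ L) {b | b ≠ 0}) :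
    A.ncard * L.ncard = Nat.card F - 1 := by
  rw [← ncard_prod, h.ncard_eq, ncard_setOf_ne_zero]

lemma exists_bijOn_mul_iff [Fintype F] (L : Finset F) :
    (∃ A : Set F, BijOn (fun p : F × F => p.1 * p.2) (A ×ˢ ↑L) {b | b ≠ 0}) ↔
    (L.card ∣ Fintype.card F - 1 ∧
      ∃ a : Fin ((Fintype.card F - 1) / L.card) → F, Function.Injective a ∧
        {b : F | b ≠ 0} = {b : F | ∃ i, ∃ l ∈ L, b = a i * l}) := by
  rw [Fintype.card_eq_nat_card]
  constructor
  · rintro ⟨A, hA⟩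
    have hcard := ncard_mul_ncard_eq_of_bijOn_mul hA
    rw [ncard_coe_finset] at hcard
    have hL : 0 < L.card := Nat.pos_of_ne_zero fun h => by
      have := Finite.one_lt_card (α := F)
      rw [h] at hcard
      omega
    obtain ⟨e⟩ : Nonempty (A ≃ Fin ((Nat.card F - 1) / L.card)) := by
      rw [← hcard, Nat.mul_div_cancel _ hL]
      exact ⟨A.toFinite.equivFin⟩
    refine ⟨Dvd.intro_left _ hcard, fun i => e.symm i,
      Subtype.val_injective.comp e.symm.injective, ?_⟩
    ext b
    constructor
    · intro hb
      obtain ⟨⟨x, l⟩, ⟨hx, hl⟩, rfl⟩ := hA.surjOn hb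
      exact ⟨e ⟨x, hx⟩, l, hl, by simp⟩
    · rintro ⟨i, l, hl, rfl⟩
      exact hA.mapsTo (x := ((e.symm i : F), l)) ⟨(e.symm i).2, hl⟩
  · rintro ⟨hdvd, a, ha, hset⟩
    have hmaps : MapsTo (fun p : F × F => p.1 * p.2) (range a ×ˢ ↑L) {b | b ≠ 0} := by
      rintro ⟨_, l⟩ ⟨⟨i, rfl⟩, hl⟩
      rw [hset]
      exact ⟨i, l, hl, rfl⟩
    have hsurj : SurjOn (fun p : F × F => p.1 * p.2) (range a ×ˢ ↑L) {b | b ≠ 0} := by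
      intro b hb
      rw [hset] at hb
      obtain ⟨i, l, hl, rfl⟩ := hb
      exact ⟨(a i, l), ⟨mem_range_self i, hl⟩, rfl⟩
    refine ⟨range a, hmaps, ?_, hsurj⟩
    rw [← ncard_image_iff, hsurj.image_eq_of_mapsTo hmaps, ncard_setOf_ne_zero, ncard_prod,
      ncard_range_of_injective ha, Nat.card_fin, ncard_coe_finset, Nat.div_mul_cancel hdvd]

end Factorization

section Columns

variable {F : Type*} [Field F]

lemma injOn_smul_single_one {ι : Type*} [DecidableEq ι] {L : Set F} (hL0 : 0 ∉ L) :
    InjOn (fun p : F × ι => p.1 • (Pi.single p.2 1 : ι → F)) (L ×ˢ univ) := by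
  rintro ⟨l, j⟩ ⟨hl, -⟩ ⟨l', j'⟩ ⟨hl', -⟩ h
  have hj := congrFun h j
  simp only [Pi.smul_apply, Pi.single_eq_same, smul_eq_mul, mul_one, Pi.single_apply] at hj
  split_ifs at hj with hjj
  · rw [hj, mul_one, hjj]
  · rw [mul_zero] at hj
    exact absurd (hj ▸ hl) hL0

lemma bijOn_mulVec_iff {ι κ : Type*} [Fintype ι] [DecidableEq ι] [Nonempty ι] {L : Set F}
    (hL0 : 0 ∉ L) (P : Matrix κ ι F) :
    BijOn P.mulVec {x | ∃ a : F, (a ∈ L ∨ a = 0) ∧ ∃ i, x = a • Pi.single i 1} univ ↔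
      BijOn (fun p : F × ι => p.1 • P.col p.2) (L ×ˢ univ) {v | v ≠ 0} := by
  set ε := fun p : F × ι => p.1 • (Pi.single p.2 1 : ι → F)
  have hD : {x | ∃ a : F, (a ∈ L ∨ a = 0) ∧ ∃ i, x = a • Pi.single i 1} =
      insert 0 (ε '' (L ×ˢ univ)) := by
    ext x
    constructor
    · rintro ⟨a, ha | rfl, i, rfl⟩
      · exact Or.inr ⟨(a, i), ⟨ha, mem_univ i⟩, rfl⟩
      · exact Or.inl (zero_smul F _)
    · rintro (rfl | ⟨⟨l, j⟩, ⟨hl, -⟩, rfl⟩)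
      · exact ⟨0, Or.inr rfl, Classical.arbitrary ι, (zero_smul F _).symm⟩
      · exact ⟨l, Or.inl hl, j, rfl⟩
  have h0 : (0 : ι → F) ∉ ε '' (L ×ˢ univ) := by
    rintro ⟨⟨l, j⟩, ⟨hl, -⟩, h⟩
    have hj := congrFun h j
    simp only [ε, Pi.smul_apply, Pi.single_eq_same, smul_eq_mul, mul_one, Pi.zero_apply] at hj
    exact hL0 (hj ▸ hl)
  have huniv : (univ : Set (κ → F)) = insert (P.mulVec 0) {v | v ≠ 0} := by
    ext v
    simpa using em (v = 0)
  rw [hD, huniv, BijOn.insert_iff h0 (by simp), ← bijOn_comp_iff (injOn_smul_single_one hL0)]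
  congr! with p
  simp only [Function.comp_apply, Matrix.mulVec_smul, Matrix.mulVec_single_one]

end Columns

section Tiling

variable {F V ι : Type*} [Field F] [AddCommGroup V] [Module F V]

lemma bijOn_mul_of_bijOn_smul {L : Set F} (hL0 : 0 ∉ L) {c : ι → V}
    (hc : BijOn (fun p : F × ι => p.1 • c p.2) (L ×ˢ univ) {v | v ≠ 0}) {u : V} (hu : u ≠ 0) :
    BijOn (fun p : F × F => p.1 * p.2) ({a | ∃ j, c j = a • u} ×ˢ L) {b | b ≠ 0} := by
  have hne : ∀ {l}, l ∈ L → l ≠ 0 := fun hl h => hL0 (h ▸ hl)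
  have hsmul : ∀ {a l : F} {j}, c j = a • u → l • c j = (a * l) • u := fun h => by
    rw [h, smul_smul, mul_comm]
  refine ⟨?_, ?_, ?_⟩
  · rintro ⟨a, l⟩ ⟨⟨j, hj⟩, hl⟩
    exact left_ne_zero_of_smul (hsmul hj ▸ hc.mapsTo (x := (l, j)) ⟨hl, mem_univ j⟩)
  · rintro ⟨a, l⟩ ⟨⟨j, hj⟩, hl⟩ ⟨a', l'⟩ ⟨⟨j', hj'⟩, hl'⟩ h
    have hlj : (l, j) = (l', j') := hc.injOn ⟨hl, mem_univ j⟩ ⟨hl', mem_univ j'⟩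
      (by simp only [hsmul hj, hsmul hj']; exact congrArg (· • u) h)
    obtain ⟨rfl, rfl⟩ := Prod.mk.inj hlj
    exact congrArg (·, l) (smul_left_injective F hu (hj.symm.trans hj'))
  · intro b hb
    obtain ⟨⟨l, j⟩, ⟨hl, -⟩, h⟩ := hc.surjOn (smul_ne_zero hb hu)
    refine ⟨(b * l⁻¹, l), ⟨⟨j, ?_⟩, hl⟩, inv_mul_cancel_right₀ (hne hl) b⟩
    rw [mul_comm, ← smul_smul, ← h, inv_smul_smul₀ (hne hl)]

lemma Projectivization.mk_smul_rep (p : ℙ F V) {t : F} (ht : t ≠ 0) :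
    mk F (t • p.rep) (smul_ne_zero ht p.rep_nonzero) = p := by
  conv_rhs => rw [← mk_rep p]
  exact (mk_eq_mk_iff' F _ _ _ _).2 ⟨t, rfl⟩

lemma exists_bijOn_smul_of_bijOn_mul {A L : Set F}
    (hA : BijOn (fun p : F × F => p.1 * p.2) (A ×ˢ L) {b | b ≠ 0}) (e : ι ≃ A × ℙ F V) :
    ∃ c : ι → V, BijOn (fun p : F × ι => p.1 • c p.2) (L ×ˢ univ) {v | v ≠ 0} := by
  refine ⟨fun j => ((e j).1 : F) • (e j).2.rep, ?_, ?_, ?_⟩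
  · rintro ⟨l, j⟩ ⟨hl, -⟩
    have hal : ((e j).1 : F) * l ≠ 0 := hA.mapsTo (x := (_, l)) ⟨(e j).1.2, hl⟩
    exact smul_ne_zero (right_ne_zero_of_mul hal)
      (smul_ne_zero (left_ne_zero_of_mul hal) (e j).2.rep_nonzero)
  · rintro ⟨l, j⟩ ⟨hl, -⟩ ⟨l', j'⟩ ⟨hl', -⟩ h
    rcases hej : e j with ⟨⟨a, ha⟩, p⟩
    rcases hej' : e j' with ⟨⟨a', ha'⟩, p'⟩
    simp only [hej, hej', smul_smul] at h
    have hal : a * l ≠ 0 := hA.mapsTo (x := (a, l)) ⟨ha, hl⟩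
    have hal' : a' * l' ≠ 0 := hA.mapsTo (x := (a', l')) ⟨ha', hl'⟩
    rw [mul_comm] at hal hal'
    have hp : p = p' := calc
      p = Projectivization.mk F ((l * a) • p.rep) _ := (p.mk_smul_rep hal).symm
      _ = Projectivization.mk F ((l' * a') • p'.rep) _ := by congr 1
      _ = p' := p'.mk_smul_rep hal'
    subst hp
    have hmul : (a, l) = (a', l') := hA.injOn ⟨ha, hl⟩ ⟨ha', hl'⟩ (by
      simpa only [mul_comm a, mul_comm a'] using smul_left_injective F p.rep_nonzero h)
    obtain ⟨rfl, rfl⟩ := Prod.mk.inj hmul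
    rw [e.injective (hej.trans hej'.symm)]
  · intro v hv
    obtain ⟨t, ht⟩ := Projectivization.exists_smul_eq_mk_rep F v hv
    obtain ⟨⟨a, l⟩, ⟨ha, hl⟩, hal⟩ := hA.surjOn (t⁻¹.ne_zero : ((t⁻¹ : Fˣ) : F) ≠ 0)
    refine ⟨(l, e.symm (⟨a, ha⟩, Projectivization.mk F v hv)), ⟨hl, mem_univ _⟩, ?_⟩
    simp only [Equiv.apply_symm_apply, smul_smul, mul_comm l, ← ht]
    rw [show a * l = ((t⁻¹ : Fˣ) : F) from hal, ← Units.smul_def, inv_smul_smul]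

lemma ncard_mul_ncard_mul_card_projectivization [Finite F] [Finite V] {A L : Set F}
    (hA : BijOn (fun p : F × F => p.1 * p.2) (A ×ˢ L) {b | b ≠ 0}) :
    A.ncard * L.ncard * Nat.card (ℙ F V) = Nat.card V - 1 := by
  rw [ncard_mul_ncard_eq_of_bijOn_mul hA, Projectivization.card F V, mul_comm]

end Tiling

theorem stmt_10_general {F : Type*} [Field F] [Fintype F]
    (L : Finset F) (hLne : L.Nonempty) (hL0 : (0 : F) ∉ L)
    {s n r : ℕ} (hs : 2 ≤ s) (hn : 1 ≤ n) (hr : 1 ≤ r)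
    (hcard : Fintype.card F ^ r = 1 + L.card * s * n) :
    (∃ P : Matrix (Fin r) (Fin (s * n)) F,
      Set.BijOn P.mulVec
        {x : Fin (s * n) → F | ∃ a : F, (a ∈ L ∨ a = 0) ∧
          ∃ i : Fin (s * n), x = a • (Pi.single i (1 : F) : Fin (s * n) → F)}
        Set.univ) ↔
    (L.card ∣ Fintype.card F - 1 ∧
      ∃ a : Fin ((Fintype.card F - 1) / L.card) → F, Function.Injective a ∧
        {b : F | b ≠ 0} = {b : F | ∃ i, ∃ l ∈ L, b = a i * l}) := by
  rw [← exists_bijOn_mul_iff]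
  have hL0' : (0 : F) ∉ (L : Set F) := hL0
  have : Nonempty (Fin (s * n)) := ⟨⟨0, Nat.mul_pos (by omega) hn⟩⟩
  constructor
  · rintro ⟨P, hP⟩
    have hu : (Pi.single ⟨0, hr⟩ 1 : Fin r → F) ≠ 0 := Pi.single_ne_zero_iff.2 one_ne_zero
    exact ⟨_, bijOn_mul_of_bijOn_smul hL0' ((bijOn_mulVec_iff hL0' P).1 hP) hu⟩
  · rintro ⟨A, hA⟩
    have hcardA : Nat.card (A × ℙ F (Fin r → F)) = s * n := by
      have h := ncard_mul_ncard_mul_card_projectivization (V := Fin r → F) hA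
      rw [ncard_coe_finset, Nat.card_fun, Nat.card_fin, Nat.card_eq_fintype_card (α := F), hcard] at h
      rw [Nat.card_prod, Nat.card_coe_set_eq]
      refine Nat.eq_of_mul_eq_mul_left (Finset.card_pos.2 hLne) ?_
      calc L.card * (A.ncard * Nat.card (ℙ F (Fin r → F)))
          = A.ncard * L.card * Nat.card (ℙ F (Fin r → F)) := by ring
        _ = L.card * (s * n) := by rw [h, Nat.add_sub_cancel_left, mul_assoc]
    obtain ⟨c, hc⟩ := exists_bijOn_smul_of_bijOn_mul hA (Finite.equivFinOfCardEq hcardA).symm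
    exact ⟨Matrix.of fun i j => c j i, (bijOn_mulVec_iff hL0' _).2 hc⟩

/-- Theorem 7: for the generalized Hamming source with deviation alphabet
`L`, an `r × sn` matrix that is bijective from `D̃ = {λ·e_i : λ ∈ L ∪ {0}, 1 ≤ i ≤ sn}`
onto `F^r` exists iff `|L|` divides `|F| - 1` and `F \ {0}` is the set of products
`a_i·λ` for distinct `a_1, …, a_k ∈ F` with `k = (|F|-1)/|L|` and `λ ∈ L`. -/
theorem stmt_10 {F : Type*} [Field F] [Fintype F] [DecidableEq F]
    (L : Finset F) (hLne : L.Nonempty) (hL0 : (0 : F) ∉ L)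
    {s n r : ℕ} (hs : 2 ≤ s) (hn : 1 ≤ n) (hr : 1 ≤ r)
    (hcard : Fintype.card F ^ r = 1 + L.card * s * n) :
    (∃ P : Matrix (Fin r) (Fin (s * n)) F,
      Set.BijOn P.mulVec
        {x : Fin (s * n) → F | ∃ a : F, (a ∈ L ∨ a = 0) ∧
          ∃ i : Fin (s * n), x = a • (Pi.single i (1 : F) : Fin (s * n) → F)}
        Set.univ) ↔
    (L.card ∣ Fintype.card F - 1 ∧
      ∃ a : Fin ((Fintype.card F - 1) / L.card) → F, Function.Injective a ∧
        {b : F | b ≠ 0} = {b : F | ∃ i, ∃ l ∈ L, b = a i * l}) :=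
  stmt_10_general L hLne hL0 hs hn hr hcard
end

section
/- Let F be a finite field, L a nonempty subset of F not containing 0, n ≥ 1 an integer, and set L± = L ∪ (−L). Let r ≥ 1 be an integer such that |F|^r = 1 + n·|L±|. Let D̃ = {a·e_i ∈ F^{2n} : a ∈ L± ∪ {0}, n < i ≤ 2n} (e_1,…,e_{2n} the standard basis of F^{2n}) and D̃' = {a·e_i ∈ F^n : a ∈ L± ∪ {0}, 1 ≤ i ≤ n} (e_1,…,e_n the standard basis of F^n). Then the following are equivalent: (1) there exists an r × 2n matrix P over F whose restriction to D̃ is a bijection onto F^r; (2) there exists an r × n matrix Q_2 over F whose restriction to D̃' is a bijection onto F^r; (3) |L±| divides |F| − 1 and there exist distinct elements a_1, …, a_k of F, with k = (|F| − 1)/|L±|, such that F \ {0} = {a_i·λ : 1 ≤ i ≤ k, λ ∈ L±}. -/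
/-!
Call `c : κ → V` a tiling by `S` when `(s, i) ↦ s • c i` is a bijection from `S × κ` onto the
nonzero vectors of `V`. A matrix restricted to `{a • eᵢ : a ∈ S ∪ {0}}` is a bijection onto `F^r`
exactly when the corresponding columns form such a tiling, which gives (1) ⇔ (2); and (3) says
that `a` tiles `F` itself. A tiling of `F^r` restricts to a tiling of the line through any nonzero
vector, i.e. of `F`; conversely a tiling `a` of `F` gives the tiling `(ℓ, j) ↦ a j • ℓ` of `F^r`,
with `ℓ` running over representatives of the points of the projective space. In each case
counting `|S| · |κ| = |V| - 1` fixes the number of tiles, and the hypothesis on `|F|^r` makes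
it `n`.
-/

open Matrix
open scoped LinearAlgebra.Projectivization

section

variable {F : Type*} [Field F]

def IsNonzeroTiling {V κ : Type*} [AddCommGroup V] [Module F V] (S : Set F) (c : κ → V) :
    Prop :=
  Set.BijOn (fun p : F × κ => p.1 • c p.2) (S ×ˢ Set.univ) {v | v ≠ 0}

namespace IsNonzeroTiling

variable {V κ : Type*} [AddCommGroup V] [Module F V] {S : Set F} {c : κ → V}

theorem smul_ne_zero (h : IsNonzeroTiling S c) {s : F} (hs : s ∈ S) (i : κ) : s • c i ≠ 0 :=
  h.mapsTo (Set.mk_mem_prod hs trivial)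

theorem eq_of_smul_eq (h : IsNonzeroTiling S c) {s s' : F} (hs : s ∈ S) (hs' : s' ∈ S)
    {i j : κ} (he : s • c i = s' • c j) : s = s' ∧ i = j :=
  Prod.ext_iff.mp (h.injOn (Set.mk_mem_prod hs trivial) (Set.mk_mem_prod hs' trivial) he)

theorem exists_smul_eq (h : IsNonzeroTiling S c) {v : V} (hv : v ≠ 0) :
    ∃ s ∈ S, ∃ i, s • c i = v := by
  obtain ⟨⟨s, i⟩, ⟨hs, -⟩, hsi⟩ := h.surjOn hv
  exact ⟨s, hs, i, hsi⟩

theorem comp_equiv (h : IsNonzeroTiling S c) {κ' : Type*} (e : κ' ≃ κ) :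
    IsNonzeroTiling S (c ∘ e) := by
  have he : Set.BijOn (fun p : F × κ' => (p.1, e p.2)) (S ×ˢ Set.univ) (S ×ˢ Set.univ) :=
    (Set.bijOn_id S).prodMap e.bijective.bijOn_univ
  exact h.comp he

theorem exists_of_card_eq [Finite κ] {κ' : Type*} [Finite κ'] (h : IsNonzeroTiling S c)
    (hcard : Nat.card κ' = Nat.card κ) : ∃ c' : κ' → V, IsNonzeroTiling S c' :=
  let ⟨e⟩ := Finite.card_eq.mp hcard
  ⟨c ∘ e, h.comp_equiv e⟩

theorem ncard_mul_card [Finite V] (h : IsNonzeroTiling S c) :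
    S.ncard * Nat.card κ = Nat.card V - 1 := by
  have := Nat.card_congr h.equiv
  rwa [Nat.card_coe_set_eq, Nat.card_coe_set_eq, Set.ncard_prod, Set.ncard_univ,
    ← Set.compl_singleton_eq, Set.ncard_compl, Set.ncard_singleton] at this

theorem card_eq_div [Finite V] (h : IsNonzeroTiling S c) (hS : S.ncard ≠ 0) :
    Nat.card κ = (Nat.card V - 1) / S.ncard :=
  Nat.eq_div_of_mul_eq_right hS h.ncard_mul_card

theorem restrict_line (h : IsNonzeroTiling S c) {v₀ : V} (hv₀ : v₀ ≠ 0) :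
    IsNonzeroTiling S (Subtype.val : {μ : F // μ • v₀ ∈ Set.range c} → F) := by
  refine ⟨?_, ?_, ?_⟩
  · rintro ⟨s, μ, i, hi⟩ ⟨hs, -⟩
    have := h.smul_ne_zero hs i
    rw [hi, smul_smul] at this
    exact left_ne_zero_of_smul this
  · rintro ⟨s, μ, i, hi⟩ ⟨hs, -⟩ ⟨s', μ', j, hj⟩ ⟨hs', -⟩ he
    have hij : s • c i = s' • c j := by
      rw [hi, hj, smul_smul, smul_smul]
      exact congrArg (· • v₀) he
    obtain ⟨rfl, rfl⟩ := h.eq_of_smul_eq hs hs' hij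
    exact Prod.ext rfl (Subtype.ext (smul_left_injective F hv₀ (hi.symm.trans hj)))
  · intro b hb
    obtain ⟨s, hs, i, hsi⟩ := h.exists_smul_eq (_root_.smul_ne_zero hb hv₀)
    have hs0 : s ≠ 0 := left_ne_zero_of_smul (h.smul_ne_zero hs i)
    refine ⟨(s, ⟨s⁻¹ * b, i, ?_⟩), ⟨hs, trivial⟩, ?_⟩
    · rw [eq_comm, mul_smul, ← hsi, smul_smul, inv_mul_cancel₀ hs0, one_smul]
    · exact mul_inv_cancel_left₀ hs0 b

theorem smul_rep {a : κ → F} (h : IsNonzeroTiling S a) :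
    IsNonzeroTiling S (fun p : ℙ F V × κ => a p.2 • p.1.rep) := by
  refine ⟨?_, ?_, ?_⟩
  · rintro ⟨s, ℓ, j⟩ ⟨hs, -⟩
    simp only [smul_smul]
    exact _root_.smul_ne_zero (h.smul_ne_zero hs j) ℓ.rep_nonzero
  · rintro ⟨s, ℓ, j⟩ ⟨hs, -⟩ ⟨s', ℓ', j'⟩ ⟨hs', -⟩ he
    simp only [smul_smul] at he
    have hne : s * a j ≠ 0 := h.smul_ne_zero hs j
    obtain rfl : ℓ = ℓ' := by
      rw [← ℓ.mk_rep, ← ℓ'.mk_rep, Projectivization.mk_eq_mk_iff']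
      refine ⟨(s * a j)⁻¹ * (s' * a j'), ?_⟩
      rw [mul_smul, ← he, smul_smul, inv_mul_cancel₀ hne, one_smul]
    obtain ⟨rfl, rfl⟩ := h.eq_of_smul_eq hs hs' (smul_left_injective F ℓ.rep_nonzero he)
    rfl
  · intro v hv
    obtain ⟨u, hu⟩ := Projectivization.exists_smul_eq_mk_rep F v hv
    obtain ⟨s, hs, j, hsj : s * a j = _⟩ := h.exists_smul_eq (Units.ne_zero u⁻¹)
    refine ⟨(s, Projectivization.mk F v hv, j), ⟨hs, trivial⟩, ?_⟩
    show s • a j • _ = v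
    rw [smul_smul, hsj, ← hu, ← Units.smul_def, inv_smul_smul]

end IsNonzeroTiling

theorem exists_isNonzeroTiling_iff_of_card_eq {V : Type*} [AddCommGroup V] [Module F V]
    [Finite V] [Finite F] {S : Set F} (hS : S.Nonempty) {n : ℕ} (hn : 0 < n)
    (hcard : Nat.card V = 1 + n * S.ncard) :
    (∃ c : Fin n → V, IsNonzeroTiling S c) ↔
      ∃ a : Fin ((Nat.card F - 1) / S.ncard) → F, IsNonzeroTiling S a := by
  obtain ⟨s, hs⟩ := hS
  have hS0 : S.ncard ≠ 0 := Set.ncard_ne_zero_of_mem hs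
  constructor
  · rintro ⟨c, hc⟩
    have hline := hc.restrict_line (right_ne_zero_of_smul (hc.smul_ne_zero hs ⟨0, hn⟩))
    exact hline.exists_of_card_eq (by rw [Nat.card_fin, hline.card_eq_div hS0])
  · rintro ⟨a, ha⟩
    have hV := ha.smul_rep (V := V)
    refine hV.exists_of_card_eq ?_
    rw [hV.card_eq_div hS0, hcard, Nat.add_sub_cancel_left,
      Nat.mul_div_cancel _ (Nat.pos_of_ne_zero hS0), Nat.card_fin]

theorem image_smul_prod_univ {κ : Type*} (S : Set F) (a : κ → F) :
    (fun p : F × κ => p.1 • a p.2) '' (S ×ˢ Set.univ) = {b | ∃ i, ∃ l ∈ S, b = a i * l} := by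
  ext b
  simp only [Set.mem_image, Set.mem_prod, Set.mem_univ, and_true, Prod.exists, smul_eq_mul,
    Set.mem_ofPred_eq]
  constructor
  · rintro ⟨l, i, hl, rfl⟩
    exact ⟨i, l, hl, mul_comm _ _⟩
  · rintro ⟨i, l, hl, rfl⟩
    exact ⟨l, i, hl, mul_comm _ _⟩

theorem exists_isNonzeroTiling_field_iff [Fintype F] {S : Finset F} (hS : S.Nonempty) :
    (∃ a : Fin ((Fintype.card F - 1) / S.card) → F, IsNonzeroTiling (S : Set F) a) ↔
      S.card ∣ Fintype.card F - 1 ∧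
        ∃ a : Fin ((Fintype.card F - 1) / S.card) → F, Function.Injective a ∧
          {b : F | b ≠ 0} = {b : F | ∃ i, ∃ l ∈ S, b = a i * l} := by
  have hcard {a : Fin ((Fintype.card F - 1) / S.card) → F} (ha : IsNonzeroTiling (S : Set F) a) :
      S.card * ((Fintype.card F - 1) / S.card) = Fintype.card F - 1 := by
    simpa only [Set.ncard_coe_finset, Nat.card_eq_fintype_card, Fintype.card_fin] using
      ha.ncard_mul_card
  constructor
  · rintro ⟨a, ha⟩
    obtain ⟨l, hl⟩ := hS
    refine ⟨⟨_, (hcard ha).symm⟩, a, fun i j hij => ?_, ?_⟩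
    · exact (ha.eq_of_smul_eq hl hl (congrArg (l • ·) hij)).2
    · exact ha.image_eq.symm.trans (image_smul_prod_univ _ a)
  · rintro ⟨hdvd, a, -, ha⟩
    have him : (fun p : F × _ => p.1 • a p.2) '' (↑S ×ˢ Set.univ) = {b | b ≠ 0} :=
      (image_smul_prod_univ _ a).trans ha.symm
    refine ⟨a, ?_⟩
    rw [IsNonzeroTiling, ← him]
    refine Set.InjOn.bijOn_image (Set.injOn_of_ncard_image_eq ?_)
    rw [him, Set.ncard_prod, Set.ncard_univ, Nat.card_fin, Set.ncard_coe_finset,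
      Nat.mul_div_cancel' hdvd, ← Set.compl_singleton_eq, Set.ncard_compl, Set.ncard_singleton,
      Nat.card_eq_fintype_card]

section Matrix

variable {m ι κ : Type*} [Fintype ι] [DecidableEq ι]

theorem bijOn_mulVec_iff_isNonzeroTiling [Nonempty κ] {S : Set F} (hS : 0 ∉ S) {f : κ → ι}
    (hf : f.Injective) (M : Matrix m ι F) :
    Set.BijOn M.mulVec {x | ∃ a : F, (a ∈ S ∨ a = 0) ∧ ∃ i, x = a • Pi.single (f i) 1}
        Set.univ ↔ IsNonzeroTiling S (fun i => M.col (f i)) := by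
  set g : F × κ → ι → F := fun p => p.1 • Pi.single (f p.2) 1
  have hg (a : F) (i : κ) (j : ι) : g (a, i) j = if j = f i then a else 0 := by
    simp [g, Pi.single_apply]
  have hD : {x | ∃ a : F, (a ∈ S ∨ a = 0) ∧ ∃ i, x = a • Pi.single (f i) 1} =
      insert 0 (g '' (S ×ˢ Set.univ)) := by
    ext x
    simp only [g, Set.mem_ofPred_eq, Set.mem_insert_iff, Set.mem_image, Set.mem_prod,
      Set.mem_univ, and_true, Prod.exists]
    constructor
    · rintro ⟨a, ha | rfl, i, rfl⟩
      · exact Or.inr ⟨a, i, ha, rfl⟩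
      · exact Or.inl (zero_smul _ _)
    · rintro (rfl | ⟨a, i, ha, rfl⟩)
      · exact ⟨0, Or.inr rfl, Classical.arbitrary κ, (zero_smul _ _).symm⟩
      · exact ⟨a, Or.inl ha, i, rfl⟩
  have hg0 : (0 : ι → F) ∉ g '' (S ×ˢ Set.univ) := by
    rintro ⟨⟨a, i⟩, ⟨ha, -⟩, hai⟩
    have := congrFun hai (f i)
    rw [hg, if_pos rfl, Pi.zero_apply] at this
    exact hS (this ▸ ha)
  have hginj : Set.InjOn g (S ×ˢ Set.univ) := by
    rintro ⟨a, i⟩ ⟨ha, -⟩ ⟨a', i'⟩ - he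
    have := congrFun he (f i)
    rw [hg, hg, if_pos rfl] at this
    split_ifs at this with hii
    · exact Prod.ext this (hf hii)
    · exact absurd (this ▸ ha) hS
  have hMg : M.mulVec ∘ g = fun p => p.1 • M.col (f p.2) := by
    funext p
    simp [g, mulVec_smul]
  have huniv : (Set.univ : Set (m → F)) = insert (M.mulVec 0) {v | v ≠ 0} := by
    ext v
    simp [em]
  rw [hD, huniv, Set.BijOn.insert_iff hg0 (by simp), ← Set.bijOn_comp_iff hginj, hMg]
  rfl

theorem exists_bijOn_mulVec_iff [Nonempty κ] {S : Set F} (hS : 0 ∉ S) {f : κ → ι}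
    (hf : f.Injective) :
    (∃ M : Matrix m ι F,
      Set.BijOn M.mulVec {x | ∃ a : F, (a ∈ S ∨ a = 0) ∧ ∃ i, x = a • Pi.single (f i) 1}
        Set.univ) ↔ ∃ c : κ → m → F, IsNonzeroTiling S c := by
  simp only [bijOn_mulVec_iff_isNonzeroTiling hS hf]
  refine ⟨fun ⟨M, hM⟩ => ⟨_, hM⟩, fun ⟨c, hc⟩ => ⟨(Matrix.of (Function.extend f c 0))ᵀ, ?_⟩⟩
  convert hc using 2 with i
  exact hf.extend_apply c 0 i

end Matrix

end

theorem stmt_11_general {F : Type*} [Field F] [Fintype F] [DecidableEq F]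
    (L : Finset F) (hLne : L.Nonempty) (hL0 : (0 : F) ∉ L)
    (Lpm : Finset F) (hLpm : Lpm = L ∪ L.image (fun x => -x))
    {n r : ℕ} (hn : 1 ≤ n)
    (hcard : Fintype.card F ^ r = 1 + n * Lpm.card) :
    ((∃ P : Matrix (Fin r) (Fin (2 * n)) F,
        Set.BijOn P.mulVec
          {x : Fin (2 * n) → F | ∃ a : F, (a ∈ Lpm ∨ a = 0) ∧
            ∃ i : Fin (2 * n), n ≤ i.val ∧ x = a • (Pi.single i (1 : F) : Fin (2 * n) → F)}
          Set.univ) ↔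
      (∃ Q₂ : Matrix (Fin r) (Fin n) F,
        Set.BijOn Q₂.mulVec
          {x : Fin n → F | ∃ a : F, (a ∈ Lpm ∨ a = 0) ∧
            ∃ i : Fin n, x = a • (Pi.single i (1 : F) : Fin n → F)}
          Set.univ)) ∧
    ((∃ Q₂ : Matrix (Fin r) (Fin n) F,
        Set.BijOn Q₂.mulVec
          {x : Fin n → F | ∃ a : F, (a ∈ Lpm ∨ a = 0) ∧
            ∃ i : Fin n, x = a • (Pi.single i (1 : F) : Fin n → F)}
          Set.univ) ↔
      (Lpm.card ∣ Fintype.card F - 1 ∧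
        ∃ a : Fin ((Fintype.card F - 1) / Lpm.card) → F, Function.Injective a ∧
          {b : F | b ≠ 0} = {b : F | ∃ i, ∃ l ∈ Lpm, b = a i * l})) := by
  have hLpm0 : (0 : F) ∉ (Lpm : Set F) := by simpa [hLpm] using hL0
  have hLpmne : Lpm.Nonempty := hLpm ▸ hLne.mono Finset.subset_union_left
  have : Nonempty (Fin n) := ⟨⟨0, hn⟩⟩
  let second : Fin n → Fin (2 * n) := fun i => ⟨n + i, by omega⟩
  have hsecond : second.Injective := fun i j hij =>
    Fin.ext (by simpa [second] using congrArg Fin.val hij)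
  have hD : {x : Fin (2 * n) → F | ∃ a : F, (a ∈ Lpm ∨ a = 0) ∧
      ∃ i : Fin (2 * n), n ≤ i.val ∧ x = a • (Pi.single i (1 : F) : Fin (2 * n) → F)} =
      {x | ∃ a : F, (a ∈ Lpm ∨ a = 0) ∧ ∃ i, x = a • Pi.single (second i) 1} := by
    ext x
    refine exists_congr fun a => and_congr_right fun _ => ⟨?_, ?_⟩
    · rintro ⟨i, hi, rfl⟩
      exact ⟨⟨i - n, by omega⟩, by congr; ext; simp [second]; omega⟩
    · rintro ⟨i, rfl⟩
      exact ⟨second i, Nat.le_add_right n i, rfl⟩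
  have hVcard : Nat.card (Fin r → F) = 1 + n * (Lpm : Set F).ncard := by
    simp [hcard]
  have h1 := exists_bijOn_mulVec_iff (m := Fin r) hLpm0 hsecond
  have h2 := exists_bijOn_mulVec_iff (m := Fin r) hLpm0 (Function.injective_id (α := Fin n))
  have h3 := exists_isNonzeroTiling_iff_of_card_eq (Finset.coe_nonempty.mpr hLpmne) hn hVcard
  rw [Nat.card_eq_fintype_card, Set.ncard_coe_finset] at h3
  exact ⟨hD ▸ h1.trans h2.symm, h2.trans (h3.trans (exists_isNonzeroTiling_field_iff hLpmne))⟩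

/-- Theorem 7.2: for the two-terminal generalized Hamming source with
deviation alphabet `L± = L ∪ (−L)`, the following are equivalent: (1) existence of an
`r × 2n` matrix bijective from `D̃` onto `F^r`; (2) existence of an `r × n` matrix
bijective from the nontrivial segment `D̃'` onto `F^r`; (3) `|L±|` divides `|F| − 1` and
`F \ {0} = {a_i·λ : 1 ≤ i ≤ k, λ ∈ L±}` for distinct `a_1,…,a_k`, `k = (|F|−1)/|L±|`. -/
theorem stmt_11 {F : Type*} [Field F] [Fintype F] [DecidableEq F]
    (L : Finset F) (hLne : L.Nonempty) (hL0 : (0 : F) ∉ L)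
    (Lpm : Finset F) (hLpm : Lpm = L ∪ L.image (fun x => -x))
    {n r : ℕ} (hn : 1 ≤ n) (hr : 1 ≤ r)
    (hcard : Fintype.card F ^ r = 1 + n * Lpm.card) :
    ((∃ P : Matrix (Fin r) (Fin (2 * n)) F,
        Set.BijOn P.mulVec
          {x : Fin (2 * n) → F | ∃ a : F, (a ∈ Lpm ∨ a = 0) ∧
            ∃ i : Fin (2 * n), n ≤ i.val ∧ x = a • (Pi.single i (1 : F) : Fin (2 * n) → F)}
          Set.univ) ↔
      (∃ Q₂ : Matrix (Fin r) (Fin n) F,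
        Set.BijOn Q₂.mulVec
          {x : Fin n → F | ∃ a : F, (a ∈ Lpm ∨ a = 0) ∧
            ∃ i : Fin n, x = a • (Pi.single i (1 : F) : Fin n → F)}
          Set.univ)) ∧
    ((∃ Q₂ : Matrix (Fin r) (Fin n) F,
        Set.BijOn Q₂.mulVec
          {x : Fin n → F | ∃ a : F, (a ∈ Lpm ∨ a = 0) ∧
            ∃ i : Fin n, x = a • (Pi.single i (1 : F) : Fin n → F)}
          Set.univ) ↔
      (Lpm.card ∣ Fintype.card F - 1 ∧
        ∃ a : Fin ((Fintype.card F - 1) / Lpm.card) → F, Function.Injective a ∧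
          {b : F | b ≠ 0} = {b : F | ∃ i, ∃ l ∈ Lpm, b = a i * l})) :=
  stmt_11_general L hLne hL0 Lpm hLpm hn hcard
end

section
/- Let F be a field, r ≥ 0 and m ≥ 1 integers, and let D̃ = {a·e_i : a ∈ F, 1 ≤ i ≤ m} ⊆ F^m, where e_1, …, e_m is the standard basis of F^m. An r × m matrix P over F restricts to an injective map on D̃ if and only if every column of P is nonzero and no two distinct columns of P are linearly dependent (i.e., no column is a scalar multiple of a different column). -/
open Matrix

section LinearMap

variable {K V W ι : Type*} [DivisionRing K] [AddCommGroup V] [Module K V]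
  [AddCommGroup W] [Module K W]

theorem LinearIndependent.ne_smul_of_ne {v : ι → V} (hv : LinearIndependent K v) {i j : ι}
    (hij : i ≠ j) (c : K) : v j ≠ c • v i := by
  intro h
  refine hv.notMem_span_image (s := {i}) hij.symm ?_
  rw [Set.image_singleton, h]
  exact Submodule.smul_mem _ c (Submodule.mem_span_singleton_self _)

theorem LinearMap.injOn_smul_family_iff {v : ι → V} (hv : LinearIndependent K v)
    (f : V →ₗ[K] W) :
    Set.InjOn f {x | ∃ (a : K) (i : ι), x = a • v i} ↔
      (∀ i, f (v i) ≠ 0) ∧ ∀ i j, i ≠ j → ¬∃ c : K, f (v j) = c • f (v i) := by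
  constructor
  · intro hinj
    refine ⟨fun i hi => hv.ne_zero i ?_, fun i j hij ⟨c, hc⟩ => hv.ne_smul_of_ne hij c ?_⟩
    · simpa using hinj ⟨1, i, rfl⟩ ⟨0, i, rfl⟩ (by simp [hi])
    · simpa using hinj ⟨1, j, rfl⟩ ⟨c, i, rfl⟩ (by simp [hc])
  · rintro ⟨hne, hdep⟩ _ ⟨a, i, rfl⟩ _ ⟨b, j, rfl⟩ hab
    simp only [map_smul] at hab
    obtain rfl | hij := eq_or_ne i j
    · rw [← sub_eq_zero, ← sub_smul, smul_eq_zero, sub_eq_zero] at hab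
      rw [hab.resolve_right (hne i)]
    · obtain rfl | hb := eq_or_ne b 0
      · rw [zero_smul, smul_eq_zero] at hab
        rw [hab.resolve_right (hne i), zero_smul, zero_smul]
      · exact absurd ⟨b⁻¹ * a, by rw [mul_smul, hab, inv_smul_smul₀ hb]⟩ (hdep i j hij)

end LinearMap

theorem stmt_12_general {F : Type*} [Field F] {r m : ℕ}
    (P : Matrix (Fin r) (Fin m) F) :
    Set.InjOn P.mulVec
      {x : Fin m → F | ∃ (a : F) (i : Fin m), x = a • (Pi.single i (1 : F) : Fin m → F)} ↔
    ((∀ i : Fin m, (fun k => P k i) ≠ (0 : Fin r → F)) ∧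
      ∀ i j : Fin m, i ≠ j → ¬∃ c : F, (fun k => P k j) = c • (fun k => P k i)) := by
  have key := P.mulVecLin.injOn_smul_family_iff (Pi.linearIndependent_single_one (Fin m) F)
  simp only [coe_mulVecLin, mulVecLin_apply, mulVec_single_one] at key
  exact key

/-- an `r × m` matrix `P` is injective on the vectorized Hamming
representative set `D̃ = {a·e_i : a ∈ F, 1 ≤ i ≤ m}` iff every column of `P` is nonzero
and no column is a scalar multiple of a different column. -/
theorem stmt_12 {F : Type*} [Field F] {r m : ℕ} (hm : 1 ≤ m)
    (P : Matrix (Fin r) (Fin m) F) :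
    Set.InjOn P.mulVec
      {x : Fin m → F | ∃ (a : F) (i : Fin m), x = a • (Pi.single i (1 : F) : Fin m → F)} ↔
    ((∀ i : Fin m, (fun k => P k i) ≠ (0 : Fin r → F)) ∧
      ∀ i j : Fin m, i ≠ j → ¬∃ c : F, (fun k => P k j) = c • (fun k => P k i)) :=
  stmt_12_general P
end

section
/- Let F be any field and n ≥ 2 an integer, and let S = {(v, v + a·e_j) : v ∈ F^n, a ∈ F, 1 ≤ j ≤ n} be the two-terminal Hamming source over F. Then every lossless linear compression (H_1, H_2) of S, with H_1 of size m_1 × n and H_2 of size m_2 × n, satisfies m_1 + m_2 ≥ n + 2. -/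
open Matrix

/-- The two-terminal Hamming source `S = {(v, v + a·e_j) : v ∈ F^n, a ∈ F, 1 ≤ j ≤ n}`. -/
def TwoHammingSource (F : Type*) [Field F] (n : ℕ) :
    Set ((Fin n → F) × (Fin n → F)) :=
  {p | ∃ (v : Fin n → F) (a : F) (j : Fin n),
    p = (v, v + a • (Pi.single j (1 : F) : Fin n → F))}

/-!
Pick two distinct coordinates `i ≠ j`. The linear map
`(v, a, b) ↦ (H₁ v, H₂ (v + a eᵢ + b e_j))` from `Fⁿ × F × F` is injective: if it kills
`(v, a, b)`, then the source pairs `(v, v + a eᵢ)` and `(0, -b e_j)` have the same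
compression, so `v = 0` and `a eᵢ = -b e_j`, forcing `a = b = 0`. Comparing dimensions
gives `n + 2 ≤ m₁ + m₂`.
-/

lemma eq_zero_of_smul_single_eq_smul_single {ι R : Type*} [DecidableEq ι] [MulZeroOneClass R]
    {i j : ι} (hij : i ≠ j) {a b : R}
    (h : a • (Pi.single i 1 : ι → R) = b • Pi.single j 1) : a = 0 ∧ b = 0 := by
  have hi := congrFun h i
  have hj := congrFun h j
  simp only [Pi.smul_apply, Pi.single_apply, hij, hij.symm, if_true, if_false,
    smul_eq_mul, mul_one, mul_zero] at hi hj
  exact ⟨hi, hj.symm⟩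

namespace TwoHammingSource

variable {F : Type*} [Field F] {n m₁ m₂ : ℕ}

lemma mk_mem (v : Fin n → F) (a : F) (j : Fin n) :
    (v, v + a • Pi.single j 1) ∈ TwoHammingSource F n :=
  ⟨v, a, j, rfl⟩

def syndromePair (H₁ : Matrix (Fin m₁) (Fin n) F) (H₂ : Matrix (Fin m₂) (Fin n) F)
    (i j : Fin n) : (Fin n → F) × F × F →ₗ[F] (Fin m₁ → F) × (Fin m₂ → F) where
  toFun x := (H₁ *ᵥ x.1, H₂ *ᵥ (x.1 + x.2.1 • Pi.single i 1 + x.2.2 • Pi.single j 1))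
  map_add' x y := by
    simp only [Prod.fst_add, Prod.snd_add, add_smul, mulVec_add, Prod.mk_add_mk]
    abel_nf
  map_smul' c x := by
    simp only [Prod.smul_fst, Prod.smul_snd, smul_eq_mul, mul_smul, ← smul_add, mulVec_smul,
      RingHom.id_apply, Prod.smul_mk]

lemma injective_syndromePair {H₁ : Matrix (Fin m₁) (Fin n) F} {H₂ : Matrix (Fin m₂) (Fin n) F}
    (hLoss : Set.InjOn (fun p => (H₁ *ᵥ p.1, H₂ *ᵥ p.2)) (TwoHammingSource F n))
    {i j : Fin n} (hij : i ≠ j) : Function.Injective (syndromePair H₁ H₂ i j) := by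
  rw [← LinearMap.ker_eq_bot, LinearMap.ker_eq_bot']
  rintro ⟨v, a, b⟩ h
  have h₁ : H₁ *ᵥ v = 0 := congrArg Prod.fst h
  have h₂ : H₂ *ᵥ (v + a • Pi.single i 1 + b • Pi.single j 1) = 0 := congrArg Prod.snd h
  have hcollide : (H₁ *ᵥ v, H₂ *ᵥ (v + a • Pi.single i 1)) =
      (H₁ *ᵥ 0, H₂ *ᵥ (0 + (-b) • Pi.single j 1)) := by
    have hsplit : v + a • (Pi.single i 1 : Fin n → F) =
        (v + a • Pi.single i 1 + b • Pi.single j 1) + (0 + (-b) • Pi.single j 1) := by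
      module
    rw [hsplit, mulVec_add, h₁, h₂, mulVec_zero, zero_add]
  obtain ⟨rfl, hv⟩ := Prod.mk.inj (hLoss (mk_mem v a i) (mk_mem 0 (-b) j) hcollide)
  obtain ⟨rfl, hb⟩ := eq_zero_of_smul_single_eq_smul_single hij (by simpa only [zero_add] using hv)
  rw [neg_eq_zero.mp hb]
  rfl

end TwoHammingSource

/-- over any field and for `n ≥ 2`, every lossless linear compression
`(H_1, H_2)` of the two-terminal Hamming source has total code length
`m_1 + m_2 ≥ n + 2`. -/
theorem stmt_14 {F : Type*} [Field F] {n : ℕ} (hn : 2 ≤ n)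
    {m₁ m₂ : ℕ} (H₁ : Matrix (Fin m₁) (Fin n) F) (H₂ : Matrix (Fin m₂) (Fin n) F)
    (hLoss : Set.InjOn (fun p => (H₁.mulVec p.1, H₂.mulVec p.2))
      (TwoHammingSource F n)) :
    n + 2 ≤ m₁ + m₂ := by
  have hinj := TwoHammingSource.injective_syndromePair hLoss
    (i := ⟨0, by omega⟩) (j := ⟨1, by omega⟩) (by simp [Fin.ext_iff])
  simpa [Module.finrank_prod, Module.finrank_pi, add_assoc] using
    LinearMap.finrank_le_finrank_of_injective hinj
end

section
/- Let F be a field containing n distinct elements a_1, …, a_n, and let S = {(v, v + a·e_j) : v ∈ F^n, a ∈ F, 1 ≤ j ≤ n} be the two-terminal Hamming source over F. Let H_1 = I_n be the n × n identity matrix and let H_2 be the 2 × n matrix whose first row is (1, 1, …, 1) and whose second row is (a_1, a_2, …, a_n). Then (H_1, H_2) is a lossless linear compression of S, of total code length n + 2. -/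
/- Both encoders are linear and the first is injective, so two source pairs with the same
syndromes share their first component `v`; the second syndromes then differ by
`H₂ (c • e_j) - H₂ (d • e_k)`, and it suffices that distinct single-entry errors have
distinct syndromes under `H₂`. For `H₂` with columns `(1, a_j)` the first row recovers
the error value `c` and, when `c ≠ 0`, the second row recovers `a_j`, hence `j`. -/

open Matrix

theorem injOn_twoHammingSource {F ι ι' : Type*} [Field F] {n : ℕ}
    (H₁ : Matrix ι (Fin n) F) (H₂ : Matrix ι' (Fin n) F)
    (hH₁ : Function.Injective H₁.mulVec)
    (hH₂ : ∀ (c d : F) (j k : Fin n),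
      H₂ *ᵥ (c • Pi.single j 1) = H₂ *ᵥ (d • Pi.single k 1) →
        c • (Pi.single j 1 : Fin n → F) = d • Pi.single k 1) :
    Set.InjOn (fun p : (Fin n → F) × (Fin n → F) => (H₁ *ᵥ p.1, H₂ *ᵥ p.2))
      (TwoHammingSource F n) := by
  rintro _ ⟨v, c, j, rfl⟩ _ ⟨w, d, k, rfl⟩ h
  obtain ⟨hv, herr⟩ := Prod.mk.inj h
  obtain rfl : v = w := hH₁ hv
  rw [mulVec_add, mulVec_add, add_right_inj] at herr
  rw [hH₂ c d j k herr]

def onesNodesMatrix {F : Type*} [Field F] {n : ℕ} (a : Fin n → F) : Matrix (Fin 2) (Fin n) F :=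
  Matrix.of fun r i => if r = 0 then 1 else a i

theorem onesNodesMatrix_mulVec_smul_single_inj {F : Type*} [Field F] {n : ℕ}
    {a : Fin n → F} (ha : Function.Injective a) (c d : F) (j k : Fin n)
    (h : onesNodesMatrix a *ᵥ (c • Pi.single j 1) = onesNodesMatrix a *ᵥ (d • Pi.single k 1)) :
    c • (Pi.single j 1 : Fin n → F) = d • Pi.single k 1 := by
  simp only [mulVec_smul, mulVec_single_one] at h
  have hval : c = d := by simpa [onesNodesMatrix] using congrFun h 0
  have hnode : c * a j = d * a k := by simpa [onesNodesMatrix] using congrFun h 1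
  subst hval
  rcases eq_or_ne c 0 with rfl | hc
  · simp
  · rw [ha (mul_left_cancel₀ hc hnode)]

theorem stmt_15_general {F : Type*} [Field F] {n : ℕ}
    (a : Fin n → F) (ha : Function.Injective a) :
    Set.InjOn
      (fun p : (Fin n → F) × (Fin n → F) =>
        (((1 : Matrix (Fin n) (Fin n) F)).mulVec p.1,
         (Matrix.of fun (k : Fin 2) (j : Fin n) => if k = 0 then 1 else a j).mulVec p.2))
      (TwoHammingSource F n) :=
  injOn_twoHammingSource 1 (onesNodesMatrix a) (fun _ _ h => by simpa only [one_mulVec] using h)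
    (onesNodesMatrix_mulVec_smul_single_inj ha)

/-- if `a_1, …, a_n ∈ F` are distinct, then `H_1 = I_n` together with the
`2 × n` matrix `H_2` whose rows are `(1,…,1)` and `(a_1,…,a_n)` form a lossless linear
compression of the two-terminal Hamming source, of total code length `n + 2`. -/
theorem stmt_15 {F : Type*} [Field F] {n : ℕ} (hn : 1 ≤ n)
    (a : Fin n → F) (ha : Function.Injective a) :
    Set.InjOn
      (fun p : (Fin n → F) × (Fin n → F) =>
        (((1 : Matrix (Fin n) (Fin n) F)).mulVec p.1,
         (Matrix.of fun (k : Fin 2) (j : Fin n) => if k = 0 then 1 else a j).mulVec p.2))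
      (TwoHammingSource F n) :=
  stmt_15_general a ha
end

section
/- Let F be any field, s ≥ 3 and n ≥ 2 integers, and let S be the Hamming source over F with s terminals and blocklength n. Then every lossless linear compression H_1, …, H_s of S, with H_i of size m_i × n, satisfies m_1 + ⋯ + m_s ≥ max(n + 2, 2s). -/
open Matrix

/-- The Hamming source over `F` with `s` terminals and blocklength `n`: all tuples
`(v,…,v) + δ` where `δ` is zero except possibly in one component, which is `a·e_j`. -/
def HammingSource (F : Type*) [Field F] (s n : ℕ) : Set (Fin s → Fin n → F) :=
  {x | ∃ (v : Fin n → F) (i : Fin s) (a : F) (j : Fin n),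
    x = fun i' => if i' = i then v + a • (Pi.single j (1 : F) : Fin n → F) else v}

/-!
A linear map that is injective on a set `S` is injective on every subspace contained in
`S - S`, so the dimension of such a subspace bounds the dimension of the target.
For `m_i ≥ 2`: the matrix `H_i` alone is injective on the single-error patterns `a e_j`,
and `a e₀ - b e₁` sweeps out a plane. For `n + 2`: with three distinct terminals,
`(w + b e₀, w + c e₀, w, …, w) = (w, w + c e₀, w, …, w) - (-b e₀, 0, 0, …, 0)`
sweeps out a subspace of dimension `n + 2` inside `S - S`.
-/

open scoped Pointwise

theorem Set.InjOn.finrank_le_of_range_subset_sub {R M N W : Type*} [Ring R]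
    [StrongRankCondition R] [AddCommGroup M] [Module R M] [AddCommGroup N] [Module R N]
    [Module.Finite R N] [AddCommGroup W] [Module R W] {f : M →ₗ[R] N} {S : Set M}
    (hf : Set.InjOn f S) {g : W →ₗ[R] M} (hg : Function.Injective g)
    (hgS : Set.range g ⊆ S - S) :
    Module.finrank R W ≤ Module.finrank R N := by
  refine LinearMap.finrank_le_finrank_of_injective (f := f ∘ₗ g) ?_
  refine (injective_iff_map_eq_zero _).2 fun w hw => hg ?_
  obtain ⟨x, hx, y, hy, hxy⟩ := Set.mem_sub.1 (hgS ⟨w, rfl⟩)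
  have hfxy : f x = f y := by
    rw [← sub_eq_zero, ← map_sub, hxy]
    exact hw
  rw [map_zero, ← hxy, hf hx hy hfxy, sub_self]

section HammingSource

variable {F : Type*} [Field F] {s n : ℕ}

def errorPatterns (F : Type*) [Field F] (n : ℕ) : Set (Fin n → F) :=
  {x | ∃ (a : F) (j : Fin n), x = a • Pi.single j 1}

theorem update_mem_hammingSource (v : Fin n → F) (i : Fin s) (a : F) (j : Fin n) :
    Function.update (fun _ => v) i (v + a • Pi.single j 1) ∈ HammingSource F s n :=
  ⟨v, i, a, j, funext fun _ => Function.update_apply _ _ _ _⟩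

def jointMulVec {m : Fin s → ℕ} (H : ∀ i, Matrix (Fin (m i)) (Fin n) F) :
    (Fin s → Fin n → F) →ₗ[F] ∀ i, Fin (m i) → F :=
  LinearMap.pi fun i => (H i).mulVecLin ∘ₗ LinearMap.proj i

variable {m : Fin s → ℕ} {H : ∀ i, Matrix (Fin (m i)) (Fin n) F}

theorem Lossless.injOn_jointMulVec {S : Set (Fin s → Fin n → F)} (hH : Lossless H S) :
    Set.InjOn (jointMulVec H) S :=
  hH

theorem Lossless.injOn_errorPatterns (hH : Lossless H (HammingSource F s n)) (i : Fin s) :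
    Set.InjOn (H i).mulVecLin (errorPatterns F n) := by
  rintro _ ⟨a, j, rfl⟩ _ ⟨b, k, rfl⟩ hab
  have key := hH (update_mem_hammingSource 0 i a j) (update_mem_hammingSource 0 i b k) <| by
    funext i'
    by_cases h : i' = i
    · subst h
      simp only [Function.update_self, zero_add]
      exact hab
    · simp [h]
  simpa using congrFun key i

theorem Lossless.two_le (hH : Lossless H (HammingSource F s n)) (hn : 2 ≤ n) (i : Fin s) :
    2 ≤ m i := by
  let j₀ : Fin n := ⟨0, by omega⟩
  let j₁ : Fin n := ⟨1, by omega⟩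
  have hj : j₀ ≠ j₁ := by simp [j₀, j₁, Fin.ext_iff]
  let g : (F × F) →ₗ[F] Fin n → F :=
    (LinearMap.fst F F F).smulRight (Pi.single j₀ 1) +
      (LinearMap.snd F F F).smulRight (Pi.single j₁ 1)
  have hg : Function.Injective g := by
    refine (injective_iff_map_eq_zero _).2 fun p hp => ?_
    have h₀ := congrFun hp j₀
    have h₁ := congrFun hp j₁
    simp [g, hj, hj.symm] at h₀ h₁
    exact Prod.ext h₀ h₁
  have hgS : Set.range g ⊆ errorPatterns F n - errorPatterns F n := by
    rintro _ ⟨p, rfl⟩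
    refine Set.mem_sub.2 ⟨_, ⟨p.1, j₀, rfl⟩, _, ⟨-p.2, j₁, rfl⟩, ?_⟩
    simp [g, sub_eq_add_neg]
  simpa using (hH.injOn_errorPatterns i).finrank_le_of_range_subset_sub hg hgS

theorem Lossless.add_two_le_sum (hH : Lossless H (HammingSource F s n)) (hs : 3 ≤ s)
    (hn : 0 < n) : n + 2 ≤ ∑ i, m i := by
  let i₀ : Fin s := ⟨0, by omega⟩
  let i₁ : Fin s := ⟨1, by omega⟩
  let i₂ : Fin s := ⟨2, by omega⟩
  let e : Fin n → F := Pi.single ⟨0, hn⟩ 1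
  let g : ((Fin n → F) × F × F) →ₗ[F] Fin s → Fin n → F :=
    LinearMap.pi (fun _ => LinearMap.fst F _ _) +
      LinearMap.single F _ i₀ ∘ₗ (LinearMap.fst F F F ∘ₗ LinearMap.snd F _ _).smulRight e +
      LinearMap.single F _ i₁ ∘ₗ (LinearMap.snd F F F ∘ₗ LinearMap.snd F _ _).smulRight e
  have hg : Function.Injective g := by
    refine (injective_iff_map_eq_zero _).2 fun ⟨w, b, c⟩ hp => ?_
    have h₀ := congrFun hp i₀
    have h₁ := congrFun hp i₁
    have h₂ := congrFun hp i₂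
    simp [g, i₀, i₁, i₂] at h₀ h₁ h₂
    subst h₂
    simp [e] at h₀ h₁
    simp [h₀, h₁]
  have hgS : Set.range g ⊆ HammingSource F s n - HammingSource F s n := by
    rintro _ ⟨⟨w, b, c⟩, rfl⟩
    refine Set.mem_sub.2 ⟨_, update_mem_hammingSource w i₁ c ⟨0, hn⟩, _,
      update_mem_hammingSource 0 i₀ (-b) ⟨0, hn⟩, ?_⟩
    funext i
    by_cases h₀ : i = i₀ <;> by_cases h₁ : i = i₁ <;> simp [g, h₀, h₁, i₀, i₁, e]
  simpa [Module.finrank_pi_fintype] using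
    hH.injOn_jointMulVec.finrank_le_of_range_subset_sub hg hgS

end HammingSource

/-- over any field, with `s ≥ 3` and `n ≥ 2`, every lossless linear
compression of the Hamming source has total code length at least `max(n + 2, 2s)`. -/
theorem stmt_16 {F : Type*} [Field F] {s n : ℕ} (hs : 3 ≤ s) (hn : 2 ≤ n)
    {m : Fin s → ℕ} (H : ∀ i, Matrix (Fin (m i)) (Fin n) F)
    (hLoss : Lossless H (HammingSource F s n)) :
    max (n + 2) (2 * s) ≤ ∑ i, m i := by
  refine max_le (hLoss.add_two_le_sum hs (by omega)) ?_
  calc 2 * s = ∑ _i : Fin s, 2 := by simp [mul_comm]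
    _ ≤ ∑ i, m i := Finset.sum_le_sum fun i _ => hLoss.two_le hn i
end

section
/- Let F be a finite field with q = |F|, n ≥ 1 an integer, and S = {(v, v + a·e_j) : v ∈ F^n, a ∈ F, 1 ≤ j ≤ n} the two-terminal Hamming source over F. Let r' be the least nonnegative integer r such that n·(q − 1) ≤ q^r − 1. Then: (a) every lossless linear compression (H_1, H_2) of S satisfies m_1 + m_2 ≥ n + r'; and (b) there exists a lossless linear compression of S with total code length exactly n + r'. Hence the minimal total code length of a lossless linear compression of S equals n + r'. -/
/-!
A lossless code is injective on the source, which has `q ^ n * (n * (q - 1) + 1)` elements (a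
free `x₁` and an error of Hamming weight at most one), so this number is at most `q ^ (m₁ + m₂)`;
hence `n * (q - 1) ≤ q ^ (m₁ + m₂ - n) - 1` and `r' ≤ m₁ + m₂ - n`. Conversely, send `x₁`
uncompressed and compress `x₂` by a parity-check matrix of a `q`-ary Hamming code: `r'` rows
whose `n` columns represent distinct points of `ℙ(F ^ r')`, of which there are
`(q ^ r' - 1) / (q - 1) ≥ n`. Such a matrix separates the vectors of weight at most one, which
is all the decoder needs once it knows `x₁`.
-/

open Matrix

open scoped LinearAlgebra.Projectivization

def errorSource {V : Type*} [Add V] (E : Set V) : Set (V × V) :=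
  {p | ∃ v, ∃ e ∈ E, p = (v, v + e)}

theorem twoHammingSource_eq_errorSource (F : Type*) [Field F] (n : ℕ) :
    TwoHammingSource F n =
      errorSource (Set.range fun x : Fin n × F => (Pi.single x.1 x.2 : Fin n → F)) := by
  ext p
  simp only [TwoHammingSource, errorSource, Set.exists_range_iff, Prod.exists,
    ← Pi.single_smul', smul_eq_mul, mul_one]
  grind

section Counting

variable {V W : Type*}

theorem ncard_errorSource [AddGroup V] (E : Set V) :
    (errorSource E).ncard = Nat.card V * E.ncard := by
  have hsource : errorSource E = (fun p : V × V => (p.1, p.1 + p.2)) '' (Set.univ ×ˢ E) := by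
    ext p
    simp [errorSource, eq_comm]
  have hinj : Function.Injective fun p : V × V => (p.1, p.1 + p.2) := by
    rintro ⟨v, e⟩ ⟨w, e'⟩ h
    obtain ⟨rfl, h⟩ := Prod.ext_iff.mp h
    simpa using h
  rw [hsource, Set.ncard_image_of_injective _ hinj, Set.ncard_prod, Set.ncard_univ]

theorem card_mul_ncard_le_of_injOn [AddGroup V] [Finite W] {E : Set V} (f : V × V → W)
    (hf : Set.InjOn f (errorSource E)) : Nat.card V * E.ncard ≤ Nat.card W := by
  rw [← ncard_errorSource, ← Set.ncard_univ]
  exact Set.ncard_le_ncard_of_injOn f (fun _ _ => Set.mem_univ _) hf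

theorem ncard_range_single {ι M : Type*} [DecidableEq ι] [Nonempty ι] [Finite ι]
    [GroupWithZero M] [Finite M] :
    (Set.range fun x : ι × M => (Pi.single x.1 x.2 : ι → M)).ncard =
      Nat.card ι * (Nat.card M - 1) + 1 := by
  let g : Option (ι × Mˣ) → ι → M := fun o => o.elim 0 fun x => Pi.single x.1 x.2
  have hg : Function.Injective g := by
    rintro (_ | ⟨i, a⟩) (_ | ⟨j, b⟩) h
    · rfl
    · exact (b.ne_zero (by simpa [g] using (congrFun h j).symm)).elim
    · exact (a.ne_zero (by simpa [g] using congrFun h i)).elim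
    · have hij : i = j := by
        by_contra hij
        exact a.ne_zero (by simpa [g, hij] using congrFun h i)
      subst hij
      exact congrArg _ (Prod.ext rfl (Units.ext (Pi.single_injective i h)))
  have hrange : Set.range g = Set.range fun x : ι × M => (Pi.single x.1 x.2 : ι → M) := by
    ext x
    constructor
    · rintro ⟨_ | ⟨i, a⟩, rfl⟩
      · exact ⟨(Classical.arbitrary ι, 0), Pi.single_zero _⟩
      · exact ⟨(i, a), rfl⟩
    · rintro ⟨⟨i, a⟩, rfl⟩
      obtain rfl | ha := eq_or_ne a 0
      · exact ⟨none, (Pi.single_zero i).symm⟩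
      · exact ⟨some (i, Units.mk0 a ha), rfl⟩
  rw [← hrange, Set.ncard_range_of_injective hg, Finite.card_option, Nat.card_prod,
    Nat.card_units]

end Counting

theorem add_le_of_pow_mul_le {q N n M r' : ℕ} (hq : 1 < q)
    (hmin : ∀ r < r', ¬ N ≤ q ^ r - 1) (h : q ^ n * (N + 1) ≤ q ^ M) : n + r' ≤ M := by
  have hnM : n ≤ M := (Nat.pow_le_pow_iff_right hq).mp (le_of_mul_le_of_one_le_left h (by omega))
  have hN : N + 1 ≤ q ^ (M - n) := by
    rw [← Nat.add_sub_cancel' hnM, pow_add] at h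
    exact Nat.le_of_mul_le_mul_left (by simpa using h) (by positivity)
  have := hmin (M - n)
  omega

theorem injOn_errorSource_of_injective {V W₁ W₂ : Type*} [AddGroup V] [AddGroup W₂] {E : Set V}
    (f₁ : V → W₁) (f₂ : V →+ W₂) (h₁ : Function.Injective f₁) (h₂ : Set.InjOn f₂ E) :
    Set.InjOn (fun p => (f₁ p.1, f₂ p.2)) (errorSource E) := by
  rintro _ ⟨v, e, he, rfl⟩ _ ⟨w, e', he', rfl⟩ h
  obtain ⟨hv, hw⟩ := Prod.ext_iff.mp h
  obtain rfl := h₁ hv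
  simp_all [h₂ he he' (by simpa using hw)]

namespace Projectivization

variable {K V : Type*} [DivisionRing K] [AddCommGroup V] [Module K V]

theorem eq_and_eq_of_smul_rep_eq {x y : ℙ K V} {a b : K} (ha : a ≠ 0)
    (h : a • x.rep = b • y.rep) : x = y ∧ a = b := by
  have hb : b ≠ 0 := by
    rintro rfl
    simp [x.rep_nonzero, ha] at h
  have hxy : x = y := by
    rw [← mk_rep x, ← mk_rep y, mk_eq_mk_iff']
    exact ⟨a⁻¹ * b, by rw [mul_smul, ← h, inv_smul_smul₀ ha]⟩
  subst hxy
  exact ⟨rfl, smul_left_injective K x.rep_nonzero h⟩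

theorem nonempty_fin_embedding {n : ℕ} [Finite V] (h : n * (Nat.card K - 1) ≤ Nat.card V - 1)
    (hK : 1 < Nat.card K) : Nonempty (Fin n ↪ ℙ K V) := by
  rw [card K V] at h
  exact ⟨(Fin.castLEEmb (Nat.le_of_mul_le_mul_right h (by omega))).trans
    (Finite.equivFin _).symm.toEmbedding⟩

end Projectivization

section ProjectiveColumns

variable {K ι m : Type*} [Field K]

noncomputable def projectiveColumns (p : ι → ℙ K (m → K)) : Matrix m ι K :=
  Matrix.of fun i j => (p j).rep i

theorem injOn_mulVec_projectiveColumns [Fintype ι] [DecidableEq ι] {p : ι → ℙ K (m → K)}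
    (hp : Function.Injective p) :
    Set.InjOn (projectiveColumns p *ᵥ ·)
      (Set.range fun x : ι × K => (Pi.single x.1 x.2 : ι → K)) := by
  have hcol (j : ι) (a : K) : projectiveColumns p *ᵥ Pi.single j a = a • (p j).rep := by
    ext i
    simp [projectiveColumns, mulVec_single, mul_comm]
  rintro _ ⟨⟨i, a⟩, rfl⟩ _ ⟨⟨j, b⟩, rfl⟩ h
  simp only [hcol] at h
  obtain rfl | ha := eq_or_ne a 0
  · have hb : b = 0 := by simpa [(p j).rep_nonzero] using h.symm
    simp [hb]
  · obtain ⟨hij, rfl⟩ := Projectivization.eq_and_eq_of_smul_rep_eq ha h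
    rw [hp hij]

end ProjectiveColumns

/-- over a finite field with `q` elements, if `r'` is the least
nonnegative integer `r` with `n·(q−1) ≤ q^r − 1`, then (a) every lossless linear
compression `(H_1, H_2)` of the two-terminal Hamming source satisfies
`m_1 + m_2 ≥ n + r'`, and (b) some lossless linear compression attains total code
length exactly `n + r'`. -/
theorem stmt_18 {F : Type*} [Field F] [Fintype F] {n : ℕ} (hn : 1 ≤ n) (r' : ℕ)
    (hr' : n * (Fintype.card F - 1) ≤ Fintype.card F ^ r' - 1)
    (hmin : ∀ r < r', ¬ (n * (Fintype.card F - 1) ≤ Fintype.card F ^ r - 1)) :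
    (∀ {m₁ m₂ : ℕ} (H₁ : Matrix (Fin m₁) (Fin n) F) (H₂ : Matrix (Fin m₂) (Fin n) F),
      Set.InjOn (fun p => (H₁.mulVec p.1, H₂.mulVec p.2)) (TwoHammingSource F n) →
      n + r' ≤ m₁ + m₂) ∧
    (∃ (m₁ m₂ : ℕ) (H₁ : Matrix (Fin m₁) (Fin n) F) (H₂ : Matrix (Fin m₂) (Fin n) F),
      Set.InjOn (fun p => (H₁.mulVec p.1, H₂.mulVec p.2)) (TwoHammingSource F n) ∧
      m₁ + m₂ = n + r') := by
  have hq : 1 < Fintype.card F := Fintype.one_lt_card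
  rw [twoHammingSource_eq_errorSource]
  refine ⟨fun {m₁ m₂} H₁ H₂ hinj => add_le_of_pow_mul_le hq hmin ?_, ?_⟩
  · have : Nonempty (Fin n) := ⟨⟨0, hn⟩⟩
    simpa [ncard_range_single, pow_add, Nat.card_eq_fintype_card] using
      card_mul_ncard_le_of_injOn _ hinj
  · obtain ⟨p⟩ := Projectivization.nonempty_fin_embedding (K := F) (V := Fin r' → F)
      (by simpa [Nat.card_eq_fintype_card] using hr') (by rwa [Nat.card_eq_fintype_card])
    refine ⟨n, r', 1, projectiveColumns p, ?_, rfl⟩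
    exact injOn_errorSource_of_injective _ (projectiveColumns p).mulVecLin.toAddMonoidHom
      (fun x y h => by simpa using h) (injOn_mulVec_projectiveColumns p.injective)
end
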